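/- arXiv:1802.08137 — 5 statements merged into one kernel-verified Lean document; each statement's English description precedes it below -/
import Mathlib

section
/- Let T be a plane tree with n+1 vertices u_0 < u_1 < … < u_n in lexicographic order, with Łukasiewicz path W and height process H. Then for every 0 ≤ j ≤ n: H(j) = #{ k ∈ {0, …, j−1} : W(k) ≤ min_{k+1 ≤ l ≤ j} W(l) }. Moreover, for k < j, the inequality W(k) ≤ min_{k+1 ≤ l ≤ j} W(l) holds if and only if u_k is a strict ancestor of u_j. -/
open MeasureTheory ProbabilityTheory Filter Set
open scoped ENNReal NNReal Topology BigOperators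

attribute [local instance 10] Classical.propDecidable

noncomputable section

/-- A plane tree: a finite set of finite sequences of positive integers containing the empty
sequence (the root), closed under taking prefixes, and such that the children of each vertex
form an initial segment `u1, …, uk_u`. -/
structure PlaneTree where
  verts : Finset (List ℕ)
  root_mem : ([] : List ℕ) ∈ verts
  pos_entries : ∀ u ∈ verts, ∀ i ∈ u, 1 ≤ i
  prefix_closed : ∀ u ∈ verts, ∀ v : List ℕ, v <+: u → v ∈ verts
  children_interval : ∀ u ∈ verts, ∃ k : ℕ, ∀ i : ℕ, (u ++ [i]) ∈ verts ↔ 1 ≤ i ∧ i ≤ k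

namespace PlaneTree

instance : MeasurableSpace PlaneTree := ⊤

/-- The number of children `k_u` of a vertex. -/
def numChildren (T : PlaneTree) (u : List ℕ) : ℕ :=
  (T.verts.filter fun w => ∃ i : ℕ, w = u ++ [i]).card

/-- The vertices listed in lexicographic (depth-first) order `u_0 < u_1 < … < u_n`. -/
def vertexList (T : PlaneTree) : List (List ℕ) :=
  T.verts.sort (· ≤ ·)

/-- The `j`-th vertex in lexicographic order. -/
def vertex (T : PlaneTree) (j : ℕ) : List ℕ := T.vertexList.getD j ([] : List ℕ)

/-- The height process at integer times: `H(j) = |u_j|`. -/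
def height (T : PlaneTree) (j : ℕ) : ℕ := (T.vertex j).length

/-- The Łukasiewicz path: `W(0) = 0`, `W(j+1) = W(j) + k_{u_j} - 1`. -/
def lukas (T : PlaneTree) : ℕ → ℤ
  | 0 => 0
  | j + 1 => lukas T j + T.numChildren (T.vertex j) - 1

/-- Total path length `Λ(T) = Σ_{u ∈ T} |u|`. -/
def pathLength (T : PlaneTree) : ℕ := ∑ u ∈ T.verts, u.length

end PlaneTree

/-- Linear interpolation between integer times of `f : ℕ → ℝ`, valid on `[0, M]`. -/
def interp (M : ℕ) (f : ℕ → ℝ) (t : ℝ) : ℝ :=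
  f 0 + ∑ k ∈ Finset.range M, (f (k + 1) - f k) * min (max (t - (k : ℝ)) 0) 1

namespace PlaneTree

/-- The height process, extended to real arguments by linear interpolation. -/
def heightFun (T : PlaneTree) (t : ℝ) : ℝ :=
  interp T.verts.card (fun j => (T.height j : ℝ)) t

/-- The Bienaymé–Galton–Watson weight `Π_{u ∈ T} μ(k_u)` of a plane tree. -/
def bgwWeight (μ : Measure ℕ) (T : PlaneTree) : ℝ≥0∞ :=
  ∏ u ∈ T.verts, μ {T.numChildren u}

/-- The total weight of plane trees with `n+1` vertices. -/
def bgwPartition (μ : Measure ℕ) (n : ℕ) : ℝ≥0∞ :=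
  ∑' T : {T : PlaneTree // T.verts.card = n + 1}, bgwWeight μ T.1

/-- `P` is the law of a Bienaymé–Galton–Watson tree with offspring distribution `μ`
conditioned to have `n+1` vertices. -/
def IsCondBGW (μ : Measure ℕ) (n : ℕ) (P : Measure PlaneTree) : Prop :=
  IsProbabilityMeasure P ∧
    ∀ T : PlaneTree, P {T} =
      (if T.verts.card = n + 1 then bgwWeight μ T else 0) / bgwPartition μ n

end PlaneTree

open PlaneTree

/-- The law of `ξ_1 + … + ξ_n` where the `ξ_i` are i.i.d. with law `μ`. -/
def sumLaw (μ : Measure ℕ) : ℕ → Measure ℕ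
  | 0 => Measure.dirac 0
  | n + 1 => (sumLaw μ n).bind fun s => μ.map fun k => s + k

/-- The standing assumptions on the offspring distribution `μ`: it is a probability measure on
`ℕ` with `μ(0) > 0`, mean `1`, aperiodic (its support generates the group `ℤ`), and it belongs
to the domain of attraction of an `α`-stable law with normalizing increasing sequence `B_n`:
`(ξ_1 + … + ξ_n - n)/B_n` converges in distribution to a random variable `X` with
`E[exp(-λ X)] = exp(λ^α)` for all `λ ≥ 0`. -/
structure OffspringHyp (μ : Measure ℕ) (α : ℝ) (B : ℕ → ℝ) : Prop where
  prob : IsProbabilityMeasure μ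
  pos0 : 0 < μ {0}
  mean_one : (∑' k : ℕ, (k : ℝ≥0∞) * μ {k}) = 1
  aperiodic : AddSubgroup.closure ((fun k : ℕ => (k : ℤ)) '' {k : ℕ | μ {k} ≠ 0}) = ⊤
  alpha_mem : α ∈ Ioc (1 : ℝ) 2
  B_mono : StrictMono B
  B_pos : ∀ n, 0 < B n
  attract : ∃ ν : Measure ℝ, IsProbabilityMeasure ν ∧
    (∀ l : ℝ, 0 ≤ l → ∫ x, Real.exp (-l * x) ∂ν = Real.exp (l ^ α)) ∧
    ∀ f : BoundedContinuousFunction ℝ ℝ,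
      Tendsto (fun n : ℕ =>
          ∫ x, f x ∂((sumLaw μ n).map fun s : ℕ => ((s : ℝ) - n) / B n))
        atTop (𝓝 (∫ x, f x ∂ν))

/-!
The Łukasiewicz path counts pending vertices: `W(j)` is the number of vertices whose parent
precedes `u_j` in lexicographic order but which themselves come after `u_j` (the younger siblings
of `u_j` and of its ancestors). Indeed, passing from `u_j` to `u_{j+1}` adds the `k_{u_j}`
children of `u_j` to this set and removes `u_{j+1}`.

If `u_k` is an ancestor of `u_l`, every vertex pending at `u_k` is still pending at `u_l`, so
`W(k) ≤ W(l)` for all `l` between `k` and `j` when `u_k` is an ancestor of `u_j`. Otherwise the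
paths to `u_k` and `u_j` branch at some vertex `p`, and the child `w` of `p` towards `u_j` is
pending at `u_k`; the pending set of `w` is contained in that of `u_k` and misses `w`, so `W`
drops below `W(k)` at `w`. Hence the records of `W` before time `j` are the strict ancestors of
`u_j`, and there are `|u_j|` of them.
-/

namespace List

theorem IsPrefix.length_lt_of_ne {α : Type*} {x y : List α} (h : x <+: y) (hne : x ≠ y) :
    x.length < y.length :=
  h.length_le.lt_of_ne fun hl => hne (h.eq_of_length hl)

theorem IsPrefix.prefix_dropLast {α : Type*} {x y : List α} (h : x <+: y) (hne : x ≠ y) :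
    x <+: y.dropLast := by
  refine prefix_of_prefix_length_le h (dropLast_prefix y) ?_
  have := h.length_lt_of_ne hne
  rw [length_dropLast]
  omega

variable {α : Type*} [LinearOrder α] {x y z : List α}

theorem IsPrefix.lt_of_ne (h : x <+: y) (hne : x ≠ y) : x < y := by
  obtain ⟨_ | ⟨a, t⟩, rfl⟩ := h
  · exact absurd (append_nil x).symm hne
  · simpa using append_left_lt (l₁ := x) (Lex.nil : [] < a :: t)

theorem IsPrefix.le' (h : x <+: y) : x ≤ y :=
  (eq_or_ne x y).elim le_of_eq fun hne => (h.lt_of_ne hne).le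

theorem exists_append_cons_of_lt_of_not_prefix (h : x < y) (hxy : ¬ x <+: y) :
    ∃ p a s b t, a < b ∧ x = p ++ a :: s ∧ y = p ++ b :: t := by
  induction h with
  | nil => exact absurd nil_prefix hxy
  | @rel a s b t hab => exact ⟨[], a, s, b, t, hab, rfl, rfl⟩
  | @cons c s t _ ih =>
    obtain ⟨p, a, s', b, t', hab, rfl, rfl⟩ :=
      ih fun h => hxy (cons_prefix_cons.mpr ⟨rfl, h⟩)
    exact ⟨c :: p, a, s', b, t', hab, rfl, rfl⟩

theorem IsPrefix.lt_of_lt_of_not_prefix (hxz : x <+: z) (h : x < y) (hxy : ¬ x <+: y) :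
    z < y := by
  obtain ⟨p, a, s, b, t, hab, rfl, rfl⟩ := exists_append_cons_of_lt_of_not_prefix h hxy
  obtain ⟨w, rfl⟩ := hxz
  simpa using append_left_lt (l₁ := p) (Lex.rel hab : a :: (s ++ w) < b :: t)

theorem IsPrefix.prefix_of_le_of_le (hxz : x <+: z) (hxy : x ≤ y) (hyz : y ≤ z) : x <+: y := by
  by_contra hnot
  have hlt : x < y := lt_of_le_of_ne hxy fun h => hnot (h ▸ prefix_refl x)
  exact (hxz.lt_of_lt_of_not_prefix hlt hnot).not_ge hyz

theorem dropLast_prefix_of_dropLast_lt_of_lt (h₁ : x.dropLast < y) (h₂ : y < x) :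
    x.dropLast <+: y := by
  by_contra hnot
  exact ((dropLast_prefix x).lt_of_lt_of_not_prefix h₁ hnot).not_gt h₂

theorem dropLast_lt_self (hx : x ≠ []) : x.dropLast < x :=
  (dropLast_prefix x).lt_of_ne fun h => by
    have hlen := congrArg length h
    rw [length_dropLast] at hlen
    have := length_pos_iff.mpr hx
    omega

end List

namespace PlaneTree

variable (T : PlaneTree) {i j k : ℕ}

theorem vertex_eq_orderEmbOfFin (hj : j < T.verts.card) :
    T.vertex j = T.verts.orderEmbOfFin rfl ⟨j, hj⟩ := by
  rw [Finset.orderEmbOfFin_apply, vertex, List.getD_eq_getElem _ _ (by simpa [vertexList])]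
  rfl

theorem vertex_mem (hj : j < T.verts.card) : T.vertex j ∈ T.verts := by
  rw [vertex_eq_orderEmbOfFin T hj]
  exact Finset.orderEmbOfFin_mem _ _ _

theorem exists_vertex_eq {u : List ℕ} (hu : u ∈ T.verts) :
    ∃ j < T.verts.card, T.vertex j = u := by
  have : u ∈ Set.range (T.verts.orderEmbOfFin rfl) := by
    rw [Finset.range_orderEmbOfFin]; exact hu
  obtain ⟨⟨j, hj⟩, rfl⟩ := this
  exact ⟨j, hj, vertex_eq_orderEmbOfFin T hj⟩

theorem vertex_lt_vertex_iff (hi : i < T.verts.card) (hj : j < T.verts.card) :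
    T.vertex i < T.vertex j ↔ i < j := by
  rw [vertex_eq_orderEmbOfFin T hi, vertex_eq_orderEmbOfFin T hj, OrderEmbedding.lt_iff_lt,
    Fin.mk_lt_mk]

theorem vertex_le_vertex_iff (hi : i < T.verts.card) (hj : j < T.verts.card) :
    T.vertex i ≤ T.vertex j ↔ i ≤ j := by
  rw [vertex_eq_orderEmbOfFin T hi, vertex_eq_orderEmbOfFin T hj, OrderEmbedding.le_iff_le,
    Fin.mk_le_mk]

theorem vertex_inj (hi : i < T.verts.card) (hj : j < T.verts.card) :
    T.vertex i = T.vertex j ↔ i = j := by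
  rw [vertex_eq_orderEmbOfFin T hi, vertex_eq_orderEmbOfFin T hj, EmbeddingLike.apply_eq_iff_eq,
    Fin.mk.injEq]

theorem lt_vertex_succ_iff {v : List ℕ} (hv : v ∈ T.verts) (hj : j + 1 < T.verts.card) :
    v < T.vertex (j + 1) ↔ v ≤ T.vertex j := by
  obtain ⟨i, hi, rfl⟩ := T.exists_vertex_eq hv
  rw [T.vertex_lt_vertex_iff hi hj, T.vertex_le_vertex_iff hi (by omega), Nat.lt_succ_iff]

theorem dropLast_mem {v : List ℕ} (hv : v ∈ T.verts) : v.dropLast ∈ T.verts :=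
  T.prefix_closed v hv _ (List.dropLast_prefix v)

def pending (u : List ℕ) : Finset (List ℕ) :=
  T.verts.filter fun v => v.dropLast < u ∧ u < v

theorem numChildren_eq_card_filter (u : List ℕ) :
    T.numChildren u = (T.verts.filter fun v => v.dropLast = u ∧ u < v).card := by
  refine congrArg Finset.card (Finset.filter_congr fun v _ => ⟨?_, ?_⟩)
  · rintro ⟨i, rfl⟩
    exact ⟨List.dropLast_concat, (List.prefix_append _ _).lt_of_ne (by simp)⟩
  · rintro ⟨rfl, hlt⟩
    have hv : v ≠ [] := by rintro rfl; exact lt_irrefl _ hlt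
    exact ⟨v.getLast hv, (List.dropLast_append_getLast hv).symm⟩

theorem pending_vertex_zero : T.pending (T.vertex 0) = ∅ := by
  have h0 : 0 < T.verts.card := Finset.card_pos.mpr ⟨_, T.root_mem⟩
  refine Finset.filter_false_of_mem fun v hv ⟨hlt, _⟩ => ?_
  obtain ⟨i, hi, hvi⟩ := T.exists_vertex_eq (T.dropLast_mem hv)
  rw [← hvi, T.vertex_lt_vertex_iff hi h0] at hlt
  exact Nat.not_lt_zero _ hlt

theorem insert_pending_vertex_succ (hj : j + 1 < T.verts.card) :
    insert (T.vertex (j + 1)) (T.pending (T.vertex (j + 1))) =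
      T.pending (T.vertex j) ∪
        T.verts.filter fun v => v.dropLast = T.vertex j ∧ T.vertex j < v := by
  set u := T.vertex j
  set u' := T.vertex (j + 1)
  have hmem : u' ∈ T.verts := T.vertex_mem hj
  have hsucc : u < u' := (T.vertex_lt_vertex_iff (by omega) hj).2 j.lt_succ_self
  have hparent : u'.dropLast ≤ u :=
    (T.lt_vertex_succ_iff (T.dropLast_mem hmem) hj).1 <| List.dropLast_lt_self fun h =>
      List.not_lt_nil _ (h ▸ hsucc)
  ext v
  simp only [pending, Finset.mem_insert, Finset.mem_union, Finset.mem_filter, ← and_or_left,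
    ← or_and_right, ← le_iff_lt_or_eq]
  constructor
  · rintro (rfl | ⟨hv, hdl, hlt⟩)
    · exact ⟨hmem, hparent, hsucc⟩
    · exact ⟨hv, (T.lt_vertex_succ_iff (T.dropLast_mem hv) hj).1 hdl, hsucc.trans hlt⟩
  · rintro ⟨hv, hdl, hlt⟩
    have hle : u' ≤ v := not_lt.1 fun h => ((T.lt_vertex_succ_iff hv hj).1 h).not_gt hlt
    refine hle.eq_or_lt.imp Eq.symm fun h => ⟨hv, ?_, h⟩
    exact (T.lt_vertex_succ_iff (T.dropLast_mem hv) hj).2 hdl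

theorem lukas_eq_card_pending (hj : j < T.verts.card) :
    T.lukas j = (T.pending (T.vertex j)).card := by
  induction j with
  | zero => simp [lukas, pending_vertex_zero]
  | succ j ih =>
    have hdisj : Disjoint (T.pending (T.vertex j))
        (T.verts.filter fun v => v.dropLast = T.vertex j ∧ T.vertex j < v) :=
      Finset.disjoint_filter.2 fun _ _ h₁ h₂ => h₁.1.ne h₂.1
    have hcard := congrArg Finset.card (T.insert_pending_vertex_succ hj)
    rw [Finset.card_insert_of_notMem fun h => lt_irrefl _ (Finset.mem_filter.1 h).2.2,
      Finset.card_union_of_disjoint hdisj, ← numChildren_eq_card_filter] at hcard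
    rw [lukas, ih (by omega)]
    omega

theorem pending_subset_pending_of_prefix {x y : List ℕ} (h : x <+: y) :
    T.pending x ⊆ T.pending y := by
  intro v hv
  simp only [pending, Finset.mem_filter] at hv ⊢
  obtain ⟨hv, hdl, hxv⟩ := hv
  refine ⟨hv, hdl.trans_le h.le', lt_of_not_ge fun hvy => ?_⟩
  have hx : x <+: v.dropLast := (h.prefix_of_le_of_le hxv.le hvy).prefix_dropLast hxv.ne
  exact hx.le'.not_gt hdl

theorem pending_ssubset_pending_of_mem {u w : List ℕ} (hw : w ∈ T.pending u) :
    T.pending w ⊂ T.pending u := by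
  refine Finset.ssubset_iff_of_subset (fun v hv => ?_) |>.2
    ⟨w, hw, fun h => lt_irrefl w (Finset.mem_filter.1 h).2.2⟩
  simp only [pending, Finset.mem_filter] at hw hv ⊢
  obtain ⟨hv, hvw, hwv⟩ := hv
  have : v.dropLast <+: w.dropLast :=
    (List.dropLast_prefix_of_dropLast_lt_of_lt hvw hwv).prefix_dropLast hvw.ne
  exact ⟨hv, this.le'.trans_lt hw.2.1, hw.2.2.trans hwv⟩

theorem lukas_le_lukas_of_prefix (hk : k < T.verts.card) (hj : j < T.verts.card)
    (h : T.vertex k <+: T.vertex j) : T.lukas k ≤ T.lukas j := by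
  rw [T.lukas_eq_card_pending hk, T.lukas_eq_card_pending hj]
  exact_mod_cast Finset.card_le_card (T.pending_subset_pending_of_prefix h)

theorem exists_lukas_lt_of_not_prefix (hkj : k < j) (hj : j < T.verts.card)
    (h : ¬ T.vertex k <+: T.vertex j) : ∃ l ∈ Finset.Icc (k + 1) j, T.lukas l < T.lukas k := by
  have hk : k < T.verts.card := hkj.trans hj
  have hlt : T.vertex k < T.vertex j := (T.vertex_lt_vertex_iff hk hj).2 hkj
  obtain ⟨p, a, s, b, t, hab, hpk, hpj⟩ := List.exists_append_cons_of_lt_of_not_prefix hlt h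
  have hwj : p ++ [b] <+: T.vertex j := ⟨t, by simp [hpj]⟩
  obtain ⟨l, hl, hlw⟩ := T.exists_vertex_eq (T.prefix_closed _ (T.vertex_mem hj) _ hwj)
  have hw : T.vertex l ∈ T.pending (T.vertex k) := by
    refine Finset.mem_filter.2 ⟨T.vertex_mem hl, ?_, ?_⟩
    · rw [hlw, List.dropLast_concat, hpk]
      exact (List.prefix_append p _).lt_of_ne (by simp)
    · rw [hlw, hpk]
      exact List.append_left_lt (List.Lex.rel hab)
  refine ⟨l, Finset.mem_Icc.2 ⟨?_, ?_⟩, ?_⟩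
  · exact (T.vertex_lt_vertex_iff hk hl).1 (Finset.mem_filter.1 hw).2.2
  · exact (T.vertex_le_vertex_iff hl hj).1 (hlw ▸ hwj.le')
  · rw [T.lukas_eq_card_pending hk, T.lukas_eq_card_pending hl]
    exact_mod_cast Finset.card_lt_card (T.pending_ssubset_pending_of_mem hw)

theorem forall_lukas_le_iff_strictPrefix (hkj : k < j) (hj : j < T.verts.card) :
    (∀ l ∈ Finset.Icc (k + 1) j, T.lukas k ≤ T.lukas l) ↔
      T.vertex k <+: T.vertex j ∧ T.vertex k ≠ T.vertex j := by
  have hk : k < T.verts.card := hkj.trans hj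
  constructor
  · intro hrec
    refine ⟨by_contra fun h => ?_, (T.vertex_inj hk hj).not.2 hkj.ne⟩
    obtain ⟨l, hl, hlt⟩ := T.exists_lukas_lt_of_not_prefix hkj hj h
    exact (hrec l hl).not_gt hlt
  · rintro ⟨hpre, -⟩ l hl
    obtain ⟨hkl, hlj⟩ := Finset.mem_Icc.1 hl
    have hl : l < T.verts.card := hlj.trans_lt hj
    refine T.lukas_le_lukas_of_prefix hk hl (hpre.prefix_of_le_of_le ?_ ?_)
    · exact (T.vertex_le_vertex_iff hk hl).2 (by omega)
    · exact (T.vertex_le_vertex_iff hl hj).2 hlj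

theorem height_eq_card_filter_strictPrefix (hj : j < T.verts.card) :
    T.height j = ((Finset.range j).filter fun k =>
      T.vertex k <+: T.vertex j ∧ T.vertex k ≠ T.vertex j).card := by
  rw [height, ← Finset.card_range (T.vertex j).length]
  symm
  refine Finset.card_bij (fun k _ => (T.vertex k).length) ?_ ?_ ?_
  · intro k hk
    obtain ⟨-, hpre, hne⟩ := Finset.mem_filter.1 hk
    exact Finset.mem_range.2 (hpre.length_lt_of_ne hne)
  · intro k₁ hk₁ k₂ hk₂ hlen
    obtain ⟨hk₁, hpre₁, -⟩ := Finset.mem_filter.1 hk₁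
    obtain ⟨hk₂, hpre₂, -⟩ := Finset.mem_filter.1 hk₂
    have heq : T.vertex k₁ = T.vertex k₂ :=
      (List.prefix_of_prefix_length_le hpre₁ hpre₂ hlen.le).eq_of_length hlen
    rw [Finset.mem_range] at hk₁ hk₂
    exact (T.vertex_inj (hk₁.trans hj) (hk₂.trans hj)).1 heq
  · intro m hm
    rw [Finset.mem_range] at hm
    have hpre : (T.vertex j).take m <+: T.vertex j := List.take_prefix m _
    have hlen : ((T.vertex j).take m).length = m := by rw [List.length_take]; omega
    have hne : (T.vertex j).take m ≠ T.vertex j := fun h => hm.ne (h ▸ hlen).symm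
    obtain ⟨k, hk, hkm⟩ := T.exists_vertex_eq (T.prefix_closed _ (T.vertex_mem hj) _ hpre)
    have hkj : k < j := (T.vertex_lt_vertex_iff hk hj).1 (hkm ▸ hpre.lt_of_ne hne)
    refine ⟨k, Finset.mem_filter.2 ⟨Finset.mem_range.2 hkj, ?_⟩, hkm ▸ hlen⟩
    exact hkm ▸ ⟨hpre, hne⟩

end PlaneTree

/-- **The height process as records of the Łukasiewicz path**.
For a plane tree with `n+1` vertices, `H(j) = #{k < j : W(k) ≤ min_{k+1 ≤ l ≤ j} W(l)}`, and
for `k < j` the inequality `W(k) ≤ min_{k+1 ≤ l ≤ j} W(l)` holds iff `u_k` is a strict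
ancestor of `u_j`. -/
theorem height_eq_lukasiewicz_records
    (T : PlaneTree) (n : ℕ) (hn : T.verts.card = n + 1) (j : ℕ) (hj : j ≤ n) :
    T.height j =
        ((Finset.range j).filter fun k =>
          ∀ l ∈ Finset.Icc (k + 1) j, T.lukas k ≤ T.lukas l).card ∧
      ∀ k < j, (∀ l ∈ Finset.Icc (k + 1) j, T.lukas k ≤ T.lukas l) ↔
        (T.vertex k <+: T.vertex j ∧ T.vertex k ≠ T.vertex j) := by
  have hj' : j < T.verts.card := by omega
  have hrecords k (hk : k < j) := T.forall_lukas_le_iff_strictPrefix hk hj'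
  refine ⟨?_, hrecords⟩
  rw [T.height_eq_card_filter_strictPrefix hj']
  congr 1
  ext k
  simp only [Finset.mem_filter, Finset.mem_range]
  exact and_congr_right fun hk => (hrecords k hk).symm

end
end

section
/- Let N ≥ 1 and let x_1, …, x_N be integers, each ≥ −1, with x_1 + … + x_N = −1. For 1 ≤ j ≤ N let x^{(j)} denote the j-th cyclic shift, x^{(j)}_k = x_{((k+j−1) mod N)+1}. Then there is exactly one index j ∈ {1, …, N} such that all partial sums of x^{(j)} satisfy x^{(j)}_1 + … + x^{(j)}_k ≥ 0 for every 1 ≤ k ≤ N−1, and this index j is the least time at which the partial-sum path S(k) = x_1 + … + x_k attains its minimum over {1, …, N}, i.e. j = min{ 1 ≤ k ≤ N : S(k) = min_{1 ≤ i ≤ N} S(i) }. -/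
/-!
Let `S` be the partial-sum path of `x` and `S'` that of its `N`-periodic extension, so that
`S' = S` on `[0, N]` and `S'(N + l) = S(l) - 1`. The `k`-th partial sum of the `j`-th shift is
`S'(j + k) - S(j)`. Hence the `j`-th shift has nonnegative partial sums up to `N - 1` iff
`S(j) ≤ S(m)` for `j < m ≤ N` and `S(j) < S(l)` for `l < j`, i.e. iff `j` is the first point
where `S` attains its minimum on `[1, N]`.
-/

open Finset

theorem sum_Icc_one_eq_sum_range {M : Type*} [AddCommMonoid M] (f : ℕ → M) (n : ℕ) :
    ∑ i ∈ Icc 1 n, f i = ∑ i ∈ range n, f (i + 1) := by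
  rw [range_eq_Ico, sum_Ico_add' f 0 n 1, zero_add, Ico_add_one_right_eq_Icc]

section CyclicPartialSum

variable {M : Type*} [AddCommMonoid M] (x : ℕ → M) (N : ℕ)

def cyclicPartialSum (n : ℕ) : M :=
  ∑ i ∈ range n, x (i % N + 1)

theorem cyclicPartialSum_of_le {n : ℕ} (h : n ≤ N) :
    cyclicPartialSum x N n = ∑ i ∈ Icc 1 n, x i := by
  rw [sum_Icc_one_eq_sum_range, cyclicPartialSum]
  refine sum_congr rfl fun i hi => ?_
  rw [Nat.mod_eq_of_lt (by simp at hi; omega)]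

theorem cyclicPartialSum_add (j k : ℕ) :
    cyclicPartialSum x N (j + k) =
      cyclicPartialSum x N j + ∑ i ∈ Icc 1 k, x ((i + j - 1) % N + 1) := by
  rw [cyclicPartialSum, sum_range_add, sum_Icc_one_eq_sum_range]
  congr 1
  refine sum_congr rfl fun i _ => ?_
  rw [show i + 1 + j - 1 = j + i by omega]

theorem cyclicPartialSum_self_add (n : ℕ) :
    cyclicPartialSum x N (N + n) = ∑ i ∈ Icc 1 N, x i + cyclicPartialSum x N n := by
  rw [cyclicPartialSum, sum_range_add, ← cyclicPartialSum, cyclicPartialSum_of_le x N le_rfl]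
  simp only [Nat.add_mod_left]
  rfl

end CyclicPartialSum

theorem shift_partialSums_nonneg_iff {N j : ℕ} (x : ℕ → ℤ)
    (hsum : ∑ i ∈ Icc 1 N, x i = -1) (hj : j ∈ Icc 1 N) :
    (∀ k ∈ Icc 1 (N - 1), 0 ≤ ∑ i ∈ Icc 1 k, x ((i + j - 1) % N + 1)) ↔
      (∀ m ∈ Icc 1 N, ∑ i ∈ Icc 1 j, x i ≤ ∑ i ∈ Icc 1 m, x i) ∧
        ∀ l ∈ Icc 1 N, l < j → ∑ i ∈ Icc 1 j, x i < ∑ i ∈ Icc 1 l, x i := by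
  rw [mem_Icc] at hj
  have hshift : ∀ k, ∑ i ∈ Icc 1 k, x ((i + j - 1) % N + 1) =
      cyclicPartialSum x N (j + k) - ∑ i ∈ Icc 1 j, x i := fun k => by
    rw [cyclicPartialSum_add, cyclicPartialSum_of_le x N hj.2]
    ring
  have hhigh : ∀ l ≤ N, cyclicPartialSum x N (N + l) = ∑ i ∈ Icc 1 l, x i - 1 := by
    intro l hl
    rw [cyclicPartialSum_self_add, hsum, cyclicPartialSum_of_le x N hl]
    ring
  constructor
  · intro h
    have hstrict :
        ∀ l ∈ Icc 1 N, l < j → ∑ i ∈ Icc 1 j, x i < ∑ i ∈ Icc 1 l, x i := by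
      intro l hl hlj
      rw [mem_Icc] at hl
      have := h (N + l - j) (mem_Icc.2 ⟨by omega, by omega⟩)
      rw [hshift, show j + (N + l - j) = N + l by omega, hhigh l hl.2] at this
      omega
    refine ⟨fun m hm => ?_, hstrict⟩
    rw [mem_Icc] at hm
    rcases lt_trichotomy m j with hmj | rfl | hjm
    · exact (hstrict m (mem_Icc.2 hm) hmj).le
    · exact le_rfl
    · have := h (m - j) (mem_Icc.2 ⟨by omega, by omega⟩)
      rw [hshift, show j + (m - j) = m by omega, cyclicPartialSum_of_le x N hm.2] at this
      omega
  · rintro ⟨hmin, hstrict⟩ k hk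
    rw [mem_Icc] at hk
    rw [hshift]
    by_cases hjk : j + k ≤ N
    · rw [cyclicPartialSum_of_le x N hjk]
      linarith [hmin (j + k) (mem_Icc.2 ⟨by omega, hjk⟩)]
    · rw [show j + k = N + (j + k - N) by omega, hhigh _ (by omega)]
      linarith [hstrict (j + k - N) (mem_Icc.2 ⟨by omega, by omega⟩) (by omega)]

theorem eq_sInf_minimizers_iff {α : Type*} [LinearOrder α] (f : ℕ → α) {s : Finset ℕ}
    (hs : s.Nonempty) (j : ℕ) :
    j = sInf {k : ℕ | k ∈ s ∧ ∀ m ∈ s, f k ≤ f m} ↔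
      j ∈ s ∧ (∀ m ∈ s, f j ≤ f m) ∧ ∀ l ∈ s, l < j → f j < f l := by
  set A := {k : ℕ | k ∈ s ∧ ∀ m ∈ s, f k ≤ f m}
  obtain ⟨a, ha, hamin⟩ := s.exists_min_image f hs
  have hmem : sInf A ∈ A := Nat.sInf_mem ⟨a, ha, hamin⟩
  constructor
  · rintro rfl
    refine ⟨hmem.1, hmem.2, fun l hl hlj => lt_of_not_ge fun hle => ?_⟩
    have : l ∈ A := ⟨hl, fun m hm => hle.trans (hmem.2 m hm)⟩
    exact (Nat.sInf_le this).not_gt hlj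
  · rintro ⟨hj, hjmin, hjstrict⟩
    refine le_antisymm (le_of_not_gt fun hlt => ?_) (Nat.sInf_le ⟨hj, hjmin⟩)
    exact (hjstrict _ hmem.1 hlt).not_ge (hmem.2 j hj)

theorem cycle_lemma_general (N : ℕ) (x : ℕ → ℤ)
    (hsum : ∑ i ∈ Finset.Icc 1 N, x i = -1) :
    (∃! j : ℕ, j ∈ Finset.Icc 1 N ∧
        ∀ k ∈ Finset.Icc 1 (N - 1),
          0 ≤ ∑ i ∈ Finset.Icc 1 k, x ((i + j - 1) % N + 1)) ∧
      ∀ j ∈ Finset.Icc 1 N,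
        (∀ k ∈ Finset.Icc 1 (N - 1),
          0 ≤ ∑ i ∈ Finset.Icc 1 k, x ((i + j - 1) % N + 1)) →
        j = sInf {k : ℕ | k ∈ Finset.Icc 1 N ∧
          ∀ m ∈ Finset.Icc 1 N,
            ∑ i ∈ Finset.Icc 1 k, x i ≤ ∑ i ∈ Finset.Icc 1 m, x i} := by
  have hne : (Icc 1 N).Nonempty := nonempty_of_sum_ne_zero (by rw [hsum]; decide)
  have hargmin := eq_sInf_minimizers_iff (fun n => ∑ i ∈ Icc 1 n, x i) hne
  set j₀ :=
    sInf {k : ℕ | k ∈ Icc 1 N ∧ ∀ m ∈ Icc 1 N, ∑ i ∈ Icc 1 k, x i ≤ ∑ i ∈ Icc 1 m, x i}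
  have hgood : ∀ j ∈ Icc 1 N,
      (∀ k ∈ Icc 1 (N - 1), 0 ≤ ∑ i ∈ Icc 1 k, x ((i + j - 1) % N + 1)) ↔ j = j₀ :=
    fun j hj => (shift_partialSums_nonneg_iff x hsum hj).trans
      ((hargmin j).trans (and_iff_right hj)).symm
  have hj₀ : j₀ ∈ Icc 1 N := ((hargmin j₀).1 rfl).1
  exact ⟨⟨j₀, ⟨hj₀, (hgood j₀ hj₀).2 rfl⟩, fun j hj => (hgood j hj.1).1 hj.2⟩,
    fun j hj => (hgood j hj).1⟩

/-- **The cycle lemma.** Let `x_1, …, x_N` be integers `≥ -1` with sum `-1`. Among the `N`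
cyclic shifts `x^{(j)}_k = x_{((k+j-1) mod N)+1}`, exactly one has all its partial sums
`x^{(j)}_1 + … + x^{(j)}_k ≥ 0` for `1 ≤ k ≤ N-1`, and this index `j` is the least time at
which the partial-sum path `S(k) = x_1 + … + x_k` attains its minimum over `{1, …, N}`. -/
theorem cycle_lemma (N : ℕ) (hN : 1 ≤ N) (x : ℕ → ℤ)
    (hx : ∀ i ∈ Finset.Icc 1 N, -1 ≤ x i)
    (hsum : ∑ i ∈ Finset.Icc 1 N, x i = -1) :
    (∃! j : ℕ, j ∈ Finset.Icc 1 N ∧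
        ∀ k ∈ Finset.Icc 1 (N - 1),
          0 ≤ ∑ i ∈ Finset.Icc 1 k, x ((i + j - 1) % N + 1)) ∧
      ∀ j ∈ Finset.Icc 1 N,
        (∀ k ∈ Finset.Icc 1 (N - 1),
          0 ≤ ∑ i ∈ Finset.Icc 1 k, x ((i + j - 1) % N + 1)) →
        j = sInf {k : ℕ | k ∈ Finset.Icc 1 N ∧
          ∀ m ∈ Finset.Icc 1 N,
            ∑ i ∈ Finset.Icc 1 k, x i ≤ ∑ i ∈ Finset.Icc 1 m, x i} :=
  cycle_lemma_general N x hsum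
end

section
/- Let N ≥ 2 and let X_1, …, X_N be i.i.d. random variables with values in {−1, 0, 1, 2, …} such that P(X_1 + … + X_N = −1) > 0, and condition on the event { X_1 + … + X_N = −1 }. Let J = min{ 1 ≤ k ≤ N : S(k) = min_{1 ≤ i ≤ N} S(i) } be the least time at which the partial-sum path S(k) = X_1 + … + X_k attains its overall minimum. Then, under this conditioning, J is uniformly distributed on {1, …, N}, and J is independent of the cyclically shifted sequence X^{(J)} = (X_{((k+J−1) mod N)+1})_{1 ≤ k ≤ N}. -/
/-!
If an integer path of length `N` has total sum `-1`, exactly one of its `N` cyclic rotations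
attains its first minimum at the last step, namely the rotation by the first minimum `J` of the
path. Hence the event `{sum = -1, J = j, X^{(J)} ∈ t}` is the image of
`{sum = -1, J = N, X^{(J)} ∈ t}` under the rotation by `j`. The law of an i.i.d. vector is
invariant under rotations, so all these events have the same probability and
`P(sum = -1, J ∈ s, X^{(J)} ∈ t) = #(s ∩ [1, N]) · P(sum = -1, J = N, X^{(J)} ∈ t)`.
This product form says exactly that, conditionally on `{sum = -1}`, `J` is uniform and
independent of `X^{(J)}`.
-/

open MeasureTheory ProbabilityTheory Set Fin.NatCast
open scoped ENNReal Finset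

section CondIndep

variable {Ω α β : Type*} [MeasurableSpace Ω] {μ : Measure Ω} {C : Set Ω}
  {f : Ω → α} {g : Ω → β} {a : Set α → ℝ≥0∞} {b : Set β → ℝ≥0∞}

lemma cond_inter_preimage_eq_div (hC : MeasurableSet C)
    (h : ∀ s t, μ (C ∩ (f ⁻¹' s ∩ g ⁻¹' t)) = a s * b t) (s : Set α) (t : Set β) :
    μ[|C] (f ⁻¹' s ∩ g ⁻¹' t) = a s * b t / (a univ * b univ) := by
  rw [cond_apply hC, h, ← h univ univ, preimage_univ, preimage_univ, inter_univ, inter_univ,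
    ENNReal.div_eq_inv_mul]

lemma ne_zero_ne_top_of_measure_inter_preimage_eq_mul [IsFiniteMeasure μ] (hC0 : μ C ≠ 0)
    (h : ∀ s t, μ (C ∩ (f ⁻¹' s ∩ g ⁻¹' t)) = a s * b t) :
    (a univ ≠ 0 ∧ a univ ≠ ⊤) ∧ (b univ ≠ 0 ∧ b univ ≠ ⊤) := by
  have hCab : μ C = a univ * b univ := by simpa using h univ univ
  have h0 : a univ * b univ ≠ 0 := hCab ▸ hC0
  have htop : a univ * b univ ≠ ⊤ := hCab ▸ measure_ne_top μ C
  rw [mul_ne_zero_iff] at h0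
  exact ⟨⟨h0.1, fun ha => htop (ENNReal.mul_eq_top.2 (.inr ⟨ha, h0.2⟩))⟩,
    ⟨h0.2, fun hb => htop (ENNReal.mul_eq_top.2 (.inl ⟨h0.1, hb⟩))⟩⟩

lemma cond_preimage_eq_div [IsFiniteMeasure μ] (hC : MeasurableSet C) (hC0 : μ C ≠ 0)
    (h : ∀ s t, μ (C ∩ (f ⁻¹' s ∩ g ⁻¹' t)) = a s * b t) (s : Set α) :
    μ[|C] (f ⁻¹' s) = a s / a univ := by
  obtain ⟨-, hb0, hbtop⟩ := ne_zero_ne_top_of_measure_inter_preimage_eq_mul hC0 h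
  simpa [ENNReal.mul_div_mul_right _ _ hb0 hbtop] using cond_inter_preimage_eq_div hC h s univ

lemma indepFun_cond_of_measure_inter_preimage_eq_mul [IsFiniteMeasure μ] [MeasurableSpace α]
    [MeasurableSpace β] (hC : MeasurableSet C) (hC0 : μ C ≠ 0)
    (h : ∀ s t, μ (C ∩ (f ⁻¹' s ∩ g ⁻¹' t)) = a s * b t) :
    IndepFun f g μ[|C] := by
  obtain ⟨⟨ha0, hatop⟩, hb0, hbtop⟩ := ne_zero_ne_top_of_measure_inter_preimage_eq_mul hC0 h
  have hg (t : Set β) : μ[|C] (g ⁻¹' t) = b t / b univ := by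
    simpa [ENNReal.mul_div_mul_left _ _ ha0 hatop] using cond_inter_preimage_eq_div hC h univ t
  rw [indepFun_iff_measure_inter_preimage_eq_mul]
  intro s t _ _
  rw [cond_inter_preimage_eq_div hC h, cond_preimage_eq_div hC hC0 h, hg,
    ENNReal.mul_div_mul_comm (.inl ha0) (.inl hatop)]

end CondIndep

lemma ProbabilityTheory.iIndepFun.map_fun_comp_eq {Ω ι κ β : Type*} [MeasurableSpace Ω]
    [MeasurableSpace β] [Fintype κ] {P : Measure Ω} {X : ι → Ω → β}
    (hmeas : ∀ i, Measurable (X i)) (hindep : iIndepFun X P)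
    (hident : ∀ i k, P.map (X i) = P.map (X k)) {f g : κ → ι} (hf : f.Injective)
    (hg : g.Injective) :
    P.map (fun ω i => X (f i) ω) = P.map (fun ω i => X (g i) ω) := by
  rw [(hindep.precomp hf).map_fun_eq_pi_map fun i => (hmeas _).aemeasurable,
    (hindep.precomp hg).map_fun_eq_pi_map fun i => (hmeas _).aemeasurable]
  exact congrArg Measure.pi (funext fun i => hident _ _)

namespace CycleLemma

section PartialSum

variable {M : Type*} {N : ℕ}

section AddCommMonoid

variable [AddCommMonoid M]

def partialSum (x : ℕ → M) (k : ℕ) : M := ∑ i ∈ Finset.Icc 1 k, x i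

lemma partialSum_add (x : ℕ → M) (j k : ℕ) :
    partialSum x (j + k) = partialSum x j + partialSum (fun i => x (i + j)) k := by
  induction k with
  | zero => simp [partialSum]
  | succ k ih =>
    simp only [partialSum, ← add_assoc, Finset.sum_Icc_succ_top (Nat.le_add_left 1 _)] at ih ⊢
    rw [ih, add_right_comm k 1 j, add_comm k j]

lemma partialSum_congr {x y : ℕ → M} (hxy : EqOn x y (Icc 1 N)) {k : ℕ} (hk : k ≤ N) :
    partialSum x k = partialSum y k :=
  Finset.sum_congr rfl fun i hi => by
    simp only [Finset.mem_Icc] at hi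
    exact hxy ⟨hi.1, hi.2.trans hk⟩

lemma partialSum_period_add {x : ℕ → M} (hx : Function.Periodic x N) (k : ℕ) :
    partialSum x (N + k) = partialSum x N + partialSum x k := by
  rw [partialSum_add, hx.funext]

end AddCommMonoid

lemma partialSum_translate_of_periodic [AddCancelCommMonoid M] {x : ℕ → M}
    (hx : Function.Periodic x N) (j : ℕ) :
    partialSum (fun i => x (i + j)) N = partialSum x N := by
  have h := partialSum_add x j N
  rw [add_comm j N, partialSum_period_add hx, add_comm] at h
  exact (add_left_cancel h).symm

variable [AddCommMonoid M] [LinearOrder M]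

variable (N) in
noncomputable def firstArgmin (x : ℕ → M) : ℕ :=
  sInf {k : ℕ | k ∈ Finset.Icc 1 N ∧ ∀ m ∈ Finset.Icc 1 N, partialSum x k ≤ partialSum x m}

lemma firstArgmin_congr {x y : ℕ → M} (hxy : EqOn x y (Icc 1 N)) :
    firstArgmin N x = firstArgmin N y := by
  refine congrArg sInf (Set.ext fun k => and_congr_right fun hk => forall₂_congr fun m hm => ?_)
  rw [partialSum_congr hxy (Finset.mem_Icc.1 hk).2, partialSum_congr hxy (Finset.mem_Icc.1 hm).2]

lemma firstArgmin_eq_iff [NeZero N] {x : ℕ → M} {j : ℕ} :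
    firstArgmin N x = j ↔ j ∈ Finset.Icc 1 N ∧
      (∀ m ∈ Finset.Icc 1 N, partialSum x j ≤ partialSum x m) ∧
      ∀ m ∈ Finset.Icc 1 N, m < j → partialSum x j < partialSum x m := by
  set A := {k : ℕ | k ∈ Finset.Icc 1 N ∧ ∀ m ∈ Finset.Icc 1 N, partialSum x k ≤ partialSum x m}
  have hA : A.Nonempty := (Finset.Icc 1 N).exists_min_image (partialSum x)
    ⟨1, Finset.mem_Icc.2 ⟨le_rfl, Nat.one_le_iff_ne_zero.2 (NeZero.ne N)⟩⟩
  constructor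
  · rintro rfl
    obtain ⟨hj, hmin⟩ : firstArgmin N x ∈ A := Nat.sInf_mem hA
    refine ⟨hj, hmin, fun m hm hmj => ?_⟩
    have : m ∉ A := Nat.notMem_of_lt_sInf hmj
    simp only [A, mem_ofPred_eq, not_and, not_forall, not_le] at this
    obtain ⟨m', hm', hlt⟩ := this hm
    exact (hmin m' hm').trans_lt hlt
  · rintro ⟨hj, hmin, hstrict⟩
    refine le_antisymm (Nat.sInf_le ⟨hj, hmin⟩) (not_lt.1 fun hlt => ?_)
    obtain ⟨hk, hkmin⟩ : firstArgmin N x ∈ A := Nat.sInf_mem hA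
    exact (hkmin j hj).not_gt (hstrict _ hk hlt)

lemma firstArgmin_mem_Icc [NeZero N] (x : ℕ → M) : firstArgmin N x ∈ Finset.Icc 1 N :=
  (firstArgmin_eq_iff.1 rfl).1

end PartialSum

lemma firstArgmin_eq_self_iff {N : ℕ} [NeZero N] {y : ℕ → ℤ} (hsum : partialSum y N = -1) :
    firstArgmin N y = N ↔ ∀ k, 1 ≤ k → k < N → 0 ≤ partialSum y k := by
  simp only [firstArgmin_eq_iff, Finset.mem_Icc, hsum]
  constructor
  · rintro ⟨-, -, hlt⟩ k hk1 hkN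
    have := hlt k ⟨hk1, hkN.le⟩ hkN
    omega
  · intro hpos
    refine ⟨⟨Nat.one_le_iff_ne_zero.2 (NeZero.ne N), le_rfl⟩, fun m ⟨hm1, hmN⟩ => ?_,
      fun m ⟨hm1, _⟩ hmN => by linarith [hpos m hm1 hmN]⟩
    rcases hmN.lt_or_eq with hmN | rfl
    · linarith [hpos m hm1 hmN]
    · exact hsum.ge

/-- The deterministic cycle lemma; for a periodic path, rotation by `j` is translation by `j`. -/
theorem firstArgmin_translate_eq_self_iff {N : ℕ} [NeZero N] {x : ℕ → ℤ}
    (hx : Function.Periodic x N) (hsum : partialSum x N = -1) {j : ℕ}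
    (hj : j ∈ Finset.Icc 1 N) :
    firstArgmin N (fun i => x (i + j)) = N ↔ firstArgmin N x = j := by
  obtain ⟨hj1, hjN⟩ := Finset.mem_Icc.1 hj
  have hshift (k : ℕ) := partialSum_add x j k
  have hwrap (r : ℕ) := partialSum_period_add hx r
  rw [firstArgmin_eq_self_iff (hsum ▸ partialSum_translate_of_periodic hx j), firstArgmin_eq_iff]
  simp only [Finset.mem_Icc]
  -- Integrality and the total `-1` turn each strict inequality below into a `≤` shifted by one.
  constructor
  · intro hpos
    have hlt (m : ℕ) (hm1 : 1 ≤ m) (hmj : m < j) : partialSum x j < partialSum x m := by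
      have := hshift (N + m - j)
      have := hwrap m
      have := hpos (N + m - j) (by omega) (by omega)
      rw [show j + (N + m - j) = N + m by omega] at *
      omega
    refine ⟨⟨hj1, hjN⟩, fun m ⟨hm1, _⟩ => ?_, fun m ⟨hm1, _⟩ hmj => hlt m hm1 hmj⟩
    rcases lt_or_ge m j with hmj | hjm
    · exact (hlt m hm1 hmj).le
    rcases hjm.eq_or_lt with rfl | hjm
    · exact le_rfl
    have := hshift (m - j)
    have := hpos (m - j) (by omega) (by omega)
    rw [show j + (m - j) = m by omega] at *
    omega
  · rintro ⟨-, hmin, hstrict⟩ k hk1 hkN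
    have := hshift k
    rcases le_or_gt (j + k) N with hle | hgt
    · have := hmin (j + k) ⟨by omega, hle⟩
      omega
    · have := hwrap (j + k - N)
      have := hstrict (j + k - N) ⟨by omega, by omega⟩ (by omega)
      rw [show N + (j + k - N) = j + k by omega] at *
      omega

section CyclicShift

variable {α : Type*} {N : ℕ}

variable (N) in
def cyclicShift (j : ℕ) (x : ℕ → α) : ℕ → α := fun k => x ((k + j - 1) % N + 1)

lemma cyclicShift_congr [NeZero N] {x y : ℕ → α} (hxy : EqOn x y (Icc 1 N)) (j : ℕ) :
    cyclicShift N j x = cyclicShift N j y :=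
  funext fun k => hxy ⟨by omega, Nat.mod_lt _ (Nat.pos_of_neZero N)⟩

lemma cyclicShift_of_periodic {x : ℕ → α} (hx : Function.Periodic x N) {j : ℕ} (hj : 1 ≤ j) :
    cyclicShift N j x = fun k => x (k + j) := by
  funext k
  rw [cyclicShift, ← hx.nat_mul ((k + j - 1) / N), Nat.cast_id, add_right_comm, Nat.mod_add_div']
  congr 1
  omega

lemma cyclicShift_self_of_periodic [NeZero N] {x : ℕ → α} (hx : Function.Periodic x N) :
    cyclicShift N N x = x := by
  rw [cyclicShift_of_periodic hx (Nat.one_le_iff_ne_zero.2 (NeZero.ne N)), hx.funext]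

variable [NeZero N]

/-- Index `k` reads `v (k - 1)` modulo `N`, so that on `1, …, N` the sequence is
`v 0, …, v (N - 1)`, matching the `1`-based indexing of the statement. -/
def periodicExt (v : Fin N → α) : ℕ → α := fun k => v ((k : Fin N) - 1)

lemma periodicExt_periodic (v : Fin N → α) : Function.Periodic (periodicExt v) N := fun k => by
  simp [periodicExt]

lemma periodicExt_rotate (v : Fin N → α) (j : ℕ) :
    periodicExt (fun i : Fin N => v (i + j)) = fun k => periodicExt v (k + j) := by
  funext k
  simp only [periodicExt, Nat.cast_add]
  congr 1
  abel

lemma eqOn_periodicExt (x : ℕ → α) :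
    EqOn x (periodicExt fun i : Fin N => x (i + 1)) (Icc 1 N) := by
  rintro k ⟨hk1, hkN⟩
  suffices h : (((k : Fin N) - 1 : Fin N) : ℕ) + 1 = k from congrArg x h.symm
  rcases hkN.lt_or_eq with hkN | rfl
  · rw [Fin.val_sub_one_of_ne_zero, Fin.val_natCast, Nat.mod_eq_of_lt hkN]
    · omega
    · rw [Ne, Fin.natCast_eq_zero]
      exact Nat.not_dvd_of_pos_of_lt hk1 hkN
  · obtain ⟨n, rfl⟩ := Nat.exists_eq_add_one_of_ne_zero (NeZero.ne k)
    simp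

end CyclicShift

section Exchangeable

variable {N : ℕ}

variable (N) in
def cycleEvent (t : Set (ℕ → ℤ)) (j : ℕ) : Set (ℕ → ℤ) :=
  {x | partialSum x N = -1 ∧ firstArgmin N x = j ∧ cyclicShift N j x ∈ t}

variable [NeZero N]

lemma preimage_rotate_cycleEvent (t : Set (ℕ → ℤ)) {j : ℕ} (hj : j ∈ Finset.Icc 1 N) :
    (fun (v : Fin N → ℤ) i => v (i + j)) ⁻¹' (periodicExt ⁻¹' cycleEvent N t N) =
      periodicExt ⁻¹' cycleEvent N t j := by
  ext v
  have hx := periodicExt_periodic v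
  simp only [cycleEvent, mem_preimage, mem_ofPred_eq, periodicExt_rotate,
    cyclicShift_of_periodic hx (Finset.mem_Icc.1 hj).1, partialSum_translate_of_periodic hx,
    cyclicShift_self_of_periodic (hx.add_const j)]
  exact and_congr_right fun hsum => and_congr_left' (firstArgmin_translate_eq_self_iff hx hsum hj)

open Classical in
theorem measure_firstArgmin_mem_cyclicShift_mem (μ : Measure (Fin N → ℤ))
    (hμ : ∀ j : ℕ, μ.map (fun v i => v (i + j)) = μ) (s : Set ℕ) (t : Set (ℕ → ℤ)) :
    μ (periodicExt ⁻¹' {x | partialSum x N = -1 ∧ firstArgmin N x ∈ s ∧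
        cyclicShift N (firstArgmin N x) x ∈ t}) =
      #{j ∈ Finset.Icc 1 N | j ∈ s} * μ (periodicExt ⁻¹' cycleEvent N t N) := by
  have hunion : {x | partialSum x N = -1 ∧ firstArgmin N x ∈ s ∧
      cyclicShift N (firstArgmin N x) x ∈ t} =
      ⋃ j ∈ {j ∈ Finset.Icc 1 N | j ∈ s}, cycleEvent N t j := by
    ext x
    simp only [cycleEvent, mem_ofPred_eq, mem_iUnion, Finset.mem_filter, exists_prop]
    constructor
    · rintro ⟨hsum, hs, ht⟩
      exact ⟨_, ⟨firstArgmin_mem_Icc x, hs⟩, hsum, rfl, ht⟩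
    · rintro ⟨j, ⟨-, hj⟩, hsum, rfl, ht⟩
      exact ⟨hsum, hj, ht⟩
  have hdisj : PairwiseDisjoint ↑{j ∈ Finset.Icc 1 N | j ∈ s}
      fun j => (periodicExt (N := N) ⁻¹' cycleEvent N t j) :=
    fun i _ j _ hij => disjoint_left.2 fun v hi hj => hij (hi.2.1.symm.trans hj.2.1)
  rw [hunion, preimage_iUnion₂, measure_biUnion_finset hdisj fun _ _ => .of_discrete,
    Finset.sum_congr rfl, Finset.sum_const, nsmul_eq_mul]
  intro j hj
  rw [← preimage_rotate_cycleEvent t (Finset.mem_filter.1 hj).1,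
    ← Measure.map_apply .of_discrete .of_discrete, hμ]

end Exchangeable

end CycleLemma

open CycleLemma in
theorem probabilistic_cycle_lemma_general
    {Ω : Type*} [MeasurableSpace Ω] (P : Measure Ω) [IsProbabilityMeasure P]
    (N : ℕ) (X : ℕ → Ω → ℤ)
    (hmeas : ∀ i, Measurable (X i))
    (hindep : iIndepFun X P)
    (hident : ∀ i k, Measure.map (X i) P = Measure.map (X k) P)
    (hpos : 0 < P {ω | ∑ i ∈ Finset.Icc 1 N, X i ω = -1}) :
    letI J : Ω → ℕ := fun ω =>
      sInf {k : ℕ | k ∈ Finset.Icc 1 N ∧ ∀ m ∈ Finset.Icc 1 N,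
        ∑ i ∈ Finset.Icc 1 k, X i ω ≤ ∑ i ∈ Finset.Icc 1 m, X i ω}
    (∀ j ∈ Finset.Icc 1 N,
        (P[|{ω | ∑ i ∈ Finset.Icc 1 N, X i ω = -1}]) {ω | J ω = j} = (N : ℝ≥0∞)⁻¹) ∧
      IndepFun J (fun ω (k : ℕ) => X ((k + J ω - 1) % N + 1) ω)
        (P[|{ω | ∑ i ∈ Finset.Icc 1 N, X i ω = -1}]) := by
  classical
  have : NeZero N := ⟨by rintro rfl; simp at hpos⟩
  set J : Ω → ℕ := fun ω => firstArgmin N (X · ω)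
  set V : Ω → Fin N → ℤ := fun ω (i : Fin N) => X (i + 1) ω
  have hV : Measurable V := measurable_pi_lambda _ fun i => hmeas _
  have hext (ω : Ω) : EqOn (X · ω) (periodicExt (V ω)) (Icc 1 N) :=
    eqOn_periodicExt (N := N) _
  have hrot (j : ℕ) : (P.map V).map (fun v i => v (i + j)) = P.map V := by
    rw [Measure.map_map .of_discrete hV]
    exact hindep.map_fun_comp_eq hmeas hident
      ((Nat.succ_injective.comp Fin.val_injective).comp (add_left_injective _))
      (Nat.succ_injective.comp Fin.val_injective)
  have hprod (s : Set ℕ) (t : Set (ℕ → ℤ)) :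
      P ({ω | ∑ i ∈ Finset.Icc 1 N, X i ω = -1} ∩
          (J ⁻¹' s ∩ (fun ω (k : ℕ) => X ((k + J ω - 1) % N + 1) ω) ⁻¹' t)) =
        #{j ∈ Finset.Icc 1 N | j ∈ s} * P.map V (periodicExt ⁻¹' cycleEvent N t N) := by
    rw [← measure_firstArgmin_mem_cyclicShift_mem _ hrot, Measure.map_apply hV .of_discrete]
    refine congrArg P (Set.ext fun ω => ?_)
    simp only [mem_preimage, mem_inter_iff, mem_ofPred_eq, ← firstArgmin_congr (hext ω),
      ← cyclicShift_congr (hext ω), ← partialSum_congr (hext ω) le_rfl]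
    rfl
  have hCmeas : MeasurableSet {ω | ∑ i ∈ Finset.Icc 1 N, X i ω = -1} :=
    Finset.measurable_sum _ (fun i _ => hmeas i) (measurableSet_singleton _)
  refine ⟨fun j hj => ?_, indepFun_cond_of_measure_inter_preimage_eq_mul hCmeas hpos.ne' hprod⟩
  refine (cond_preimage_eq_div (f := J) hCmeas hpos.ne' hprod {j}).trans ?_
  simp [Finset.filter_eq', hj]

/-- **The probabilistic cycle lemma.** Let `X_1, …, X_N` be i.i.d. random variables with
values in `{-1, 0, 1, 2, …}`, conditioned on `X_1 + … + X_N = -1`. Let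
`J = min{1 ≤ k ≤ N : S(k) = min_{1 ≤ i ≤ N} S(i)}` be the least time at which the
partial-sum path attains its overall minimum. Then, under this conditioning, `J` is uniformly
distributed on `{1, …, N}` and is independent of the cyclically shifted sequence
`X^{(J)} = (X_{((k+J-1) mod N)+1})_k`. -/
theorem probabilistic_cycle_lemma
    {Ω : Type*} [MeasurableSpace Ω] (P : Measure Ω) [IsProbabilityMeasure P]
    (N : ℕ) (hN : 2 ≤ N) (X : ℕ → Ω → ℤ)
    (hmeas : ∀ i, Measurable (X i))
    (hval : ∀ i ω, -1 ≤ X i ω)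
    (hindep : iIndepFun X P)
    (hident : ∀ i k, Measure.map (X i) P = Measure.map (X k) P)
    (hpos : 0 < P {ω | ∑ i ∈ Finset.Icc 1 N, X i ω = -1}) :
    letI J : Ω → ℕ := fun ω =>
      sInf {k : ℕ | k ∈ Finset.Icc 1 N ∧ ∀ m ∈ Finset.Icc 1 N,
        ∑ i ∈ Finset.Icc 1 k, X i ω ≤ ∑ i ∈ Finset.Icc 1 m, X i ω}
    (∀ j ∈ Finset.Icc 1 N,
        (P[|{ω | ∑ i ∈ Finset.Icc 1 N, X i ω = -1}]) {ω | J ω = j} = (N : ℝ≥0∞)⁻¹) ∧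
      IndepFun J (fun ω (k : ℕ) => X ((k + J ω - 1) % N + 1) ω)
        (P[|{ω | ∑ i ∈ Finset.Icc 1 N, X i ω = -1}]) :=
  probabilistic_cycle_lemma_general P N X hmeas hindep hident hpos
end

section
/- Let T be a plane tree with n ≥ 1 edges (hence n+1 vertices), let C : [0, 2n] → ℝ be its contour process extended by linear interpolation between integer times, and let Λ(T) = Σ_{u∈T} |u| be its total path length. Then Λ(T) = n/2 + (1/2) ∫_0^{2n} C(t) dt. -/
open MeasureTheory ProbabilityTheory Filter Set
open scoped ENNReal NNReal Topology BigOperators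

attribute [local instance 10] Classical.propDecidable

noncomputable section

open PlaneTree

/-! The trapezoid rule is exact for the piecewise linear contour, so `∫ C = Σ_k (C(k) + C(k+1))/2`.
For a walk `h` with steps `±1`, the identity
`h_k + h_{k+1} + 1 = 4 [h_{k+1} = h_k + 1] h_{k+1} + φ(h_k) - φ(h_{k+1})`, `φ(x) = x (x + 1)`,
telescopes: for a walk returning to its start, `Σ_k (h_k + h_{k+1} + 1)` is four times the sum of
the heights reached by up steps. The up steps of the contour reach pairwise distinct non-root
vertices, and there are at least `n` of them since the walk has length `2n` and ends at height
`≥ 0`; so they reach every non-root vertex exactly once, and that sum is `Λ(T)`. -/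

theorem min_max_zero_one_eq_sub (x : ℝ) : min (max x 0) 1 = max x 0 - max (x - 1) 0 := by
  rcases le_total x 0 with h₀ | h₀
  · simp [h₀, (by linarith : x ≤ 1)]
  rcases le_total x 1 with h₁ | h₁ <;> simp [h₀, h₁]

theorem integral_max_sub_zero {a b c : ℝ} (hca : c ≤ a) (hab : a ≤ b) :
    ∫ t in c..b, max (t - a) 0 = (b - a) ^ 2 / 2 := by
  have hcont : Continuous fun t : ℝ => max (t - a) 0 := by fun_prop
  have hzero : ∫ t in c..a, max (t - a) 0 = 0 := by
    rw [intervalIntegral.integral_congr (g := fun _ => 0), intervalIntegral.integral_zero]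
    intro t ht
    rw [uIcc_of_le hca] at ht
    exact max_eq_right (by linarith [ht.2])
  have hlinear : ∫ t in a..b, max (t - a) 0 = ∫ t in a..b, (t - a) := by
    refine intervalIntegral.integral_congr fun t ht => ?_
    rw [uIcc_of_le hab] at ht
    exact max_eq_left (by linarith [ht.1])
  rw [← intervalIntegral.integral_add_adjacent_intervals (b := a) (hcont.intervalIntegrable _ _)
    (hcont.intervalIntegrable _ _), hzero, hlinear,
    intervalIntegral.integral_comp_sub_right (fun t => t), integral_id]
  ring

theorem integral_min_max_sub_zero_one {a b c : ℝ} (hca : c ≤ a) (hab : a + 1 ≤ b) :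
    ∫ t in c..b, min (max (t - a) 0) 1 = b - a - 1 / 2 := by
  simp_rw [min_max_zero_one_eq_sub, sub_sub _ a 1]
  rw [intervalIntegral.integral_sub
    ((by fun_prop : Continuous fun t : ℝ => max (t - a) 0).intervalIntegrable _ _)
    ((by fun_prop : Continuous fun t : ℝ => max (t - (a + 1)) 0).intervalIntegrable _ _),
    integral_max_sub_zero hca (by linarith), integral_max_sub_zero (by linarith) hab]
  ring

theorem mul_add_sum_range_sub_mul_eq_sum_trapezoid (f : ℕ → ℝ) (M : ℕ) :
    M * f 0 + ∑ k ∈ Finset.range M, (f (k + 1) - f k) * (M - k - 1 / 2) =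
      ∑ k ∈ Finset.range M, (f k + f (k + 1)) / 2 := by
  induction M with
  | zero => simp
  | succ M ih =>
    have hshift : ∑ k ∈ Finset.range M, (f (k + 1) - f k) * ((M + 1 : ℕ) - k - 1 / 2 : ℝ) =
        ∑ k ∈ Finset.range M, (f (k + 1) - f k) * (M - k - 1 / 2) + (f M - f 0) := by
      rw [← Finset.sum_range_sub f M, ← Finset.sum_add_distrib]
      refine Finset.sum_congr rfl fun k _ => ?_
      push_cast
      ring
    rw [Finset.sum_range_succ, hshift, Finset.sum_range_succ, ← ih]
    push_cast
    ring

theorem integral_interp (M : ℕ) (f : ℕ → ℝ) :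
    ∫ t in (0 : ℝ)..M, interp M f t = ∑ k ∈ Finset.range M, (f k + f (k + 1)) / 2 := by
  have hramp : ∀ k : ℕ, Continuous fun t : ℝ => (f (k + 1) - f k) * min (max (t - k) 0) 1 := by
    intro k; fun_prop
  unfold interp
  rw [intervalIntegral.integral_add intervalIntegrable_const
      ((continuous_finsetSum _ fun k _ => hramp k).intervalIntegrable _ _),
    intervalIntegral.integral_finsetSum fun k _ => (hramp k).intervalIntegrable _ _,
    intervalIntegral.integral_const, ← mul_add_sum_range_sub_mul_eq_sum_trapezoid]
  congr 1
  · simp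
  · refine Finset.sum_congr rfl fun k hk => ?_
    rw [intervalIntegral.integral_const_mul, integral_min_max_sub_zero_one (Nat.cast_nonneg k)
      (by exact_mod_cast Finset.mem_range.mp hk)]

section Walk

variable {R : Type*} [CommRing R] [DecidableEq R]

def upSteps (h : ℕ → R) (N : ℕ) : Finset ℕ :=
  (Finset.range N).filter fun k => h (k + 1) = h k + 1

theorem two_mul_card_upSteps (h : ℕ → R) (N : ℕ)
    (hstep : ∀ k < N, h (k + 1) = h k + 1 ∨ h k = h (k + 1) + 1) :
    2 * ((upSteps h N).card : R) = N + h N - h 0 := by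
  have hincr : ∀ k ∈ Finset.range N,
      h (k + 1) - h k = 2 * (if h (k + 1) = h k + 1 then 1 else 0) - 1 := by
    intro k hk
    split_ifs with hup
    · rw [hup]; ring
    · rcases hstep k (Finset.mem_range.mp hk) with hup' | hdown
      · exact absurd hup' hup
      · rw [hdown]; ring
  have htel := Finset.sum_range_sub h N
  rw [Finset.sum_congr rfl hincr, Finset.sum_sub_distrib, ← Finset.mul_sum, Finset.sum_boole,
    Finset.sum_const, Finset.card_range, nsmul_one] at htel
  rw [upSteps]
  linear_combination htel

theorem sum_range_add_succ_add_one_eq (h : ℕ → R) (N : ℕ)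
    (hstep : ∀ k < N, h (k + 1) = h k + 1 ∨ h k = h (k + 1) + 1) :
    ∑ k ∈ Finset.range N, (h k + h (k + 1) + 1) =
      4 * ∑ k ∈ upSteps h N, h (k + 1) + (h 0 * (h 0 + 1) - h N * (h N + 1)) := by
  have hidentity : ∀ k ∈ Finset.range N, h k + h (k + 1) + 1 =
      4 * (if h (k + 1) = h k + 1 then h (k + 1) else 0) +
        (h k * (h k + 1) - h (k + 1) * (h (k + 1) + 1)) := by
    intro k hk
    split_ifs with hup
    · rw [hup]; ring
    · rcases hstep k (Finset.mem_range.mp hk) with hup' | hdown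
      · exact absurd hup' hup
      · rw [hdown]; ring
  rw [Finset.sum_congr rfl hidentity, Finset.sum_add_distrib, ← Finset.mul_sum,
    Finset.sum_range_sub', upSteps, Finset.sum_filter]

end Walk

namespace PlaneTree

def IsExplorationWalk (T : PlaneTree) (c : ℕ → List ℕ) (N : ℕ) : Prop :=
  ∀ i < N, (∃ m, c (i + 1) = c i ++ [m] ∧ c (i + 1) ∈ T.verts ∧ ∀ j ≤ i, c j ≠ c (i + 1)) ∨
    ∃ m, c i = c (i + 1) ++ [m]

namespace IsExplorationWalk

variable {T : PlaneTree} {c : ℕ → List ℕ} {N : ℕ}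

theorem length_step (hw : T.IsExplorationWalk c N) :
    ∀ k < N, ((c (k + 1)).length : ℝ) = (c k).length + 1 ∨
      ((c k).length : ℝ) = (c (k + 1)).length + 1 := by
  intro k hk
  rcases hw k hk with ⟨m, hup, -⟩ | ⟨m, hdown⟩
  · left; simp [hup]
  · right; simp [hdown]

theorem up_of_mem_upSteps (hw : T.IsExplorationWalk c N) {k : ℕ}
    (hk : k ∈ upSteps (fun k => ((c k).length : ℝ)) N) :
    c (k + 1) ≠ [] ∧ c (k + 1) ∈ T.verts ∧ ∀ j ≤ k, c j ≠ c (k + 1) := by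
  obtain ⟨hkN, hlen⟩ := Finset.mem_filter.mp hk
  rcases hw k (Finset.mem_range.mp hkN) with ⟨m, hup, hmem, hfresh⟩ | ⟨m, hdown⟩
  · exact ⟨by simp [hup], hmem, hfresh⟩
  · simp only [hdown, List.length_append, List.length_singleton, Nat.cast_add, Nat.cast_one] at hlen
    linarith

theorem injOn_upSteps (hw : T.IsExplorationWalk c N) :
    Set.InjOn (fun k => c (k + 1)) (upSteps (fun k => ((c k).length : ℝ)) N) := by
  intro i hi j hj hij
  by_contra hne
  rcases Nat.lt_or_gt_of_ne hne with hlt | hlt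
  · exact (hw.up_of_mem_upSteps hj).2.2 (i + 1) hlt hij
  · exact (hw.up_of_mem_upSteps hi).2.2 (j + 1) hlt hij.symm

theorem mapsTo_upSteps (hw : T.IsExplorationWalk c N) :
    Set.MapsTo (fun k => c (k + 1)) (upSteps (fun k => ((c k).length : ℝ)) N)
      (T.verts.erase []) := fun _ hk =>
  Finset.mem_erase.mpr ⟨(hw.up_of_mem_upSteps hk).1, (hw.up_of_mem_upSteps hk).2.1⟩

theorem two_mul_card_upSteps_add_length (hw : T.IsExplorationWalk c N) :
    2 * (upSteps (fun k => ((c k).length : ℝ)) N).card + (c 0).length = N + (c N).length := by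
  have hcount := two_mul_card_upSteps (fun k => ((c k).length : ℝ)) N hw.length_step
  rify
  linarith

theorem card_upSteps_eq {n : ℕ} (hw : T.IsExplorationWalk c (2 * n)) (hc0 : c 0 = [])
    (hn : T.verts.card = n + 1) :
    (upSteps (fun k => ((c k).length : ℝ)) (2 * n)).card = n := by
  have hle := Finset.card_le_card_of_injOn _ hw.mapsTo_upSteps hw.injOn_upSteps
  have hcount := hw.two_mul_card_upSteps_add_length
  rw [Finset.card_erase_of_mem T.root_mem, hn] at hle
  rw [hc0, List.length_nil] at hcount
  omega

theorem length_eq_zero {n : ℕ} (hw : T.IsExplorationWalk c (2 * n)) (hc0 : c 0 = [])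
    (hn : T.verts.card = n + 1) : (c (2 * n)).length = 0 := by
  have hcount := hw.two_mul_card_upSteps_add_length
  rw [hw.card_upSteps_eq hc0 hn, hc0, List.length_nil] at hcount
  omega

theorem sum_upSteps_eq_pathLength {n : ℕ} (hw : T.IsExplorationWalk c (2 * n))
    (hc0 : c 0 = []) (hn : T.verts.card = n + 1) :
    ∑ k ∈ upSteps (fun k => ((c k).length : ℝ)) (2 * n), ((c (k + 1)).length : ℝ) =
      T.pathLength := by
  have himage : (upSteps (fun k => ((c k).length : ℝ)) (2 * n)).image (fun k => c (k + 1)) =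
      T.verts.erase [] := by
    refine Finset.eq_of_subset_of_card_le (Finset.image_subset_iff.mpr hw.mapsTo_upSteps) ?_
    rw [Finset.card_image_of_injOn hw.injOn_upSteps, hw.card_upSteps_eq hc0 hn,
      Finset.card_erase_of_mem T.root_mem, hn, Nat.add_sub_cancel]
  rw [pathLength, ← Finset.sum_erase _ List.length_nil, ← himage,
    Finset.sum_image hw.injOn_upSteps, Nat.cast_sum]

end IsExplorationWalk

end PlaneTree

theorem path_length_eq_integral_contour_general
    (T : PlaneTree) (n : ℕ) (hn : T.verts.card = n + 1)
    (c : ℕ → List ℕ)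
    (hc0 : c 0 = ([] : List ℕ))
    (hstep : ∀ i < 2 * n,
      (∃ m : ℕ, c (i + 1) = c i ++ [m] ∧ c (i + 1) ∈ T.verts ∧
          (∀ j ≤ i, c j ≠ c (i + 1)) ∧
          ∀ m' : ℕ, m' < m → c i ++ [m'] ∈ T.verts → ∃ j ≤ i, c j = c i ++ [m']) ∨
        ((∀ m : ℕ, c i ++ [m] ∈ T.verts → ∃ j ≤ i, c j = c i ++ [m]) ∧
          ∃ m : ℕ, c i = c (i + 1) ++ [m])) :
    (T.pathLength : ℝ) =
      n / 2 + (1 / 2) * ∫ t in (0 : ℝ)..(2 * n),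
        interp (2 * n) (fun j => ((c j).length : ℝ)) t := by
  have hw : T.IsExplorationWalk c (2 * n) := fun i hi =>
    (hstep i hi).imp (fun ⟨m, hup, hmem, hfresh, _⟩ => ⟨m, hup, hmem, hfresh⟩) And.right
  have hsum := sum_range_add_succ_add_one_eq (fun k => ((c k).length : ℝ)) _ hw.length_step
  rw [hw.sum_upSteps_eq_pathLength hc0 hn, hw.length_eq_zero hc0 hn, hc0, List.length_nil,
    Finset.sum_add_distrib, Finset.sum_const, Finset.card_range, nsmul_one] at hsum
  have hint := integral_interp (2 * n) fun j => ((c j).length : ℝ)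
  rw [← Finset.sum_div] at hint
  push_cast at hint hsum
  rw [hint]
  linarith

/-- **Total path length as the integral of the contour process.** Let `T` be a plane tree
with `n ≥ 1` edges, let `(c_0, …, c_{2n})` be its contour sequence (each `c_{i+1}` is the
first child of `c_i` not yet visited, or the parent of `c_i` if all its children have been
visited) and let `C` be the contour process `C(j) = |c_j|` extended by linear interpolation.
Then `Λ(T) = n/2 + (1/2) ∫_0^{2n} C(t) dt`. -/
theorem path_length_eq_integral_contour
    (T : PlaneTree) (n : ℕ) (hn : T.verts.card = n + 1) (hn1 : 1 ≤ n)
    (c : ℕ → List ℕ)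
    (hc0 : c 0 = ([] : List ℕ))
    (hstep : ∀ i < 2 * n,
      (∃ m : ℕ, c (i + 1) = c i ++ [m] ∧ c (i + 1) ∈ T.verts ∧
          (∀ j ≤ i, c j ≠ c (i + 1)) ∧
          ∀ m' : ℕ, m' < m → c i ++ [m'] ∈ T.verts → ∃ j ≤ i, c j = c i ++ [m']) ∨
        ((∀ m : ℕ, c i ++ [m] ∈ T.verts → ∃ j ≤ i, c j = c i ++ [m]) ∧
          ∃ m : ℕ, c i = c (i + 1) ++ [m])) :
    (T.pathLength : ℝ) =
      n / 2 + (1 / 2) * ∫ t in (0 : ℝ)..(2 * n),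
        interp (2 * n) (fun j => ((c j).length : ℝ)) t :=
  path_length_eq_integral_contour_general T n hn c hc0 hstep

end
end

section
/- Suppose that limsup_{n→∞} n · P( |Y| ≥ n/B_n ) > 0 (i.e., the condition P(|Y| ≥ n/B_n) = o(n^{−1}) fails). Then the sequence of laws of the continuous processes ( (B_n/n) · H^{sp}_n(nt) )_{t ∈ [0,1]}, viewed as probability measures on the space C([0,1], ℝ) of continuous functions with the uniform topology, is not tight. -/
open MeasureTheory ProbabilityTheory Filter Set
open scoped ENNReal NNReal Topology BigOperators

attribute [local instance 10] Classical.propDecidable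

noncomputable section

open PlaneTree

namespace PlaneTree

/-- The spatial position `S_{u_j}` of the `j`-th vertex, when the displacement along the edge
from `pr(u_k)` to `u_k` is `Y k`: it is the sum of the displacements over the non-root
ancestors of `u_j` (including `u_j` itself). -/
def spatialHeight (T : PlaneTree) (Y : ℕ → ℝ) (j : ℕ) : ℝ :=
  ∑ k ∈ Finset.range T.verts.card,
    if T.vertex k ≠ ([] : List ℕ) ∧ T.vertex k <+: T.vertex j then Y k else 0

end PlaneTree

lemma interp_continuous (M : ℕ) (f : ℕ → ℝ) : Continuous (interp M f) := by
  unfold interp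
  refine continuous_const.add (continuous_finsetSum _ fun k _ => ?_)
  exact continuous_const.mul
    (((continuous_id.sub continuous_const).max continuous_const).min continuous_const)

/-- The path `t ∈ [0,1] ↦ c · interp M f (scale · t)`, as a continuous map on `[0,1]`. -/
def rescaledPath (c scale : ℝ) (M : ℕ) (f : ℕ → ℝ) : C(Icc (0 : ℝ) 1, ℝ) :=
  ⟨fun t => c * interp M f (scale * (t : ℝ)),
    continuous_const.mul
      ((interp_continuous M f).comp (continuous_const.mul continuous_subtype_val))⟩


/-!
Suppose the laws were tight and pick `b > 0` with `n ν(|y| ≥ n / B_n) > b` for infinitely many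
`n`. A compact set `K` of paths is uniformly equicontinuous, so once `1 / n` is below its modulus
of continuity at level `1/4`, every path of `K` moves by less than `1/4` between consecutive grid
points `j / n`; for the rescaled spatial height this says that all `n` increments `S_{j+1} - S_j`
are smaller than `n / (4 B_n)`. Given the tree, the increment is the fresh displacement of `u_{j+1}`
plus a function of the earlier ones, and a window of width `n / (2 B_n)` misses either the bulk of
`ν` or its tail beyond `n / B_n` (note `n / B_n → ∞`, as `α > 1`). So each increment is small with
conditional probability at most `1 - b / n`, and the path lies in `K` with probability at most
`(1 - b / n) ^ n ≤ e^{-b}`, which contradicts tightness.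
-/

lemma interp_natCast (M : ℕ) (f : ℕ → ℝ) {j : ℕ} (hj : j ≤ M) : interp M f j = f j := by
  have hterm : ∀ k ∈ Finset.range M, (f (k + 1) - f k) * min (max ((j : ℝ) - k) 0) 1 =
      if k ∈ Finset.range j then f (k + 1) - f k else 0 := by
    intro k _
    by_cases hk : k < j
    · have : (1 : ℝ) ≤ j - k := by
        have : (k : ℝ) + 1 ≤ j := by exact_mod_cast hk
        linarith
      rw [if_pos (Finset.mem_range.mpr hk), max_eq_left (by linarith), min_eq_right this, mul_one]
    · have : (j : ℝ) ≤ k := by exact_mod_cast not_lt.mp hk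
      rw [if_neg (by simpa using hk), max_eq_right (by linarith), min_eq_left zero_le_one,
        mul_zero]
  rw [interp, Finset.sum_congr rfl hterm, Finset.sum_ite_mem,
    Finset.inter_eq_right.mpr (Finset.range_subset_range.mpr hj), Finset.sum_range_sub]
  ring

lemma rescaledPath_apply_of_eq_div (c : ℝ) {n M j : ℕ} (f : ℕ → ℝ) (hn : 0 < n) (hj : j ≤ M)
    {t : Icc (0 : ℝ) 1} (ht : (t : ℝ) = j / n) : rescaledPath c n M f t = c * f j := by
  change c * interp M f (n * t) = c * f j
  rw [ht, mul_div_cancel₀ _ (by positivity), interp_natCast M f hj]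

lemma abs_sub_lt_of_dist_rescaledPath_lt {c δ ε : ℝ} {n M : ℕ} {f : ℕ → ℝ} (hc : 0 < c)
    (hn : 0 < n) (hnM : n ≤ M) (hδn : 1 / (n : ℝ) < δ)
    (hosc : ∀ t₁ t₂, dist t₁ t₂ < δ → dist (rescaledPath c n M f t₁) (rescaledPath c n M f t₂) < ε)
    {j : ℕ} (hj : j < n) : |f (j + 1) - f j| < ε / c := by
  have hnR : (0 : ℝ) < n := by exact_mod_cast hn
  have hmem : ∀ i ≤ n, (i : ℝ) / n ∈ Icc (0 : ℝ) 1 := fun i hi =>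
    ⟨by positivity, div_le_one_of_le₀ (by exact_mod_cast hi) hnR.le⟩
  have hdist : dist (⟨((j + 1 : ℕ) : ℝ) / n, hmem _ hj⟩ : Icc (0 : ℝ) 1)
      ⟨(j : ℝ) / n, hmem _ hj.le⟩ = 1 / n := by
    rw [Subtype.dist_eq, Real.dist_eq, ← sub_div, Nat.cast_succ, add_sub_cancel_left,
      abs_of_pos (by positivity)]
  have := hosc _ _ (hdist.trans_lt hδn)
  rwa [rescaledPath_apply_of_eq_div c f hn (by omega) rfl,
    rescaledPath_apply_of_eq_div c f hn (by omega) rfl, Real.dist_eq, ← mul_sub, abs_mul,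
    abs_of_pos hc, ← lt_div_iff₀' hc] at this

namespace PlaneTree

instance : Countable PlaneTree :=
  Function.Injective.countable (f := verts) fun T T' h => by cases T; cases T'; congr

instance : MeasurableSingletonClass PlaneTree := ⟨fun _ => MeasurableSpace.measurableSet_top⟩

lemma IsCondBGW.ae_card_eq {μ : Measure ℕ} {n : ℕ} {ρ : Measure PlaneTree}
    (h : IsCondBGW μ n ρ) : ∀ᵐ T ∂ρ, T.verts.card = n + 1 := by
  refine ae_iff_of_countable.mpr fun T hT => ?_
  by_contra hcard
  exact hT (by rw [h.2 T, if_neg hcard, ENNReal.zero_div])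

variable (T : PlaneTree)

lemma vertex_lt_vertex {k j : ℕ} (hkj : k < j) (hj : j < T.verts.card) :
    T.vertex k < T.vertex j := by
  have hlen := T.verts.length_sort (· ≤ ·)
  simp only [vertex, vertexList, List.getD_eq_getElem _ _ (hlen ▸ hj),
    List.getD_eq_getElem _ _ (hlen ▸ hkj.trans hj)]
  exact (Finset.sortedLT_sort _).getElem_lt_getElem_iff.mpr hkj

lemma le_of_vertex_prefix {k j : ℕ} (hk : k < T.verts.card) (h : T.vertex k <+: T.vertex j) :
    k ≤ j :=
  not_lt.mp fun hjk => h.le (T.vertex_lt_vertex hjk hk)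

lemma vertex_ne_nil {j : ℕ} (hj0 : 0 < j) (hj : j < T.verts.card) : T.vertex j ≠ [] :=
  fun h => List.not_lt_nil _ (h ▸ T.vertex_lt_vertex hj0 hj)

def ancestors (j : ℕ) : Finset ℕ :=
  (Finset.range T.verts.card).filter fun k => T.vertex k ≠ [] ∧ T.vertex k <+: T.vertex j

lemma spatialHeight_eq_sum_ancestors (v : ℕ → ℝ) (j : ℕ) :
    T.spatialHeight v j = ∑ k ∈ T.ancestors j, v k :=
  (Finset.sum_filter _ _).symm

lemma le_of_mem_ancestors {j k : ℕ} (hk : k ∈ T.ancestors j) : k ≤ j := by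
  simp only [ancestors, Finset.mem_filter, Finset.mem_range] at hk
  exact T.le_of_vertex_prefix hk.1 hk.2.2

lemma self_mem_ancestors {j : ℕ} (hj0 : 0 < j) (hj : j < T.verts.card) : j ∈ T.ancestors j :=
  Finset.mem_filter.mpr ⟨Finset.mem_range.mpr hj, T.vertex_ne_nil hj0 hj, List.prefix_refl _⟩

lemma measurable_spatialHeight (j : ℕ) : Measurable fun v : ℕ → ℝ => T.spatialHeight v j := by
  simp only [spatialHeight_eq_sum_ancestors]
  exact Finset.measurable_sum _ fun k _ => measurable_pi_apply k

lemma spatialHeight_indicator_Iic (v : ℕ → ℝ) (j : ℕ) :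
    T.spatialHeight ((Iic j).indicator v) j = T.spatialHeight v j := by
  simp only [spatialHeight_eq_sum_ancestors]
  exact Finset.sum_congr rfl fun k hk =>
    indicator_of_mem (mem_Iic.mpr (T.le_of_mem_ancestors hk)) v

lemma spatialHeight_succ {j : ℕ} (hj : j + 1 < T.verts.card) (v : ℕ → ℝ) :
    T.spatialHeight v (j + 1) = v (j + 1) + T.spatialHeight ((Iic j).indicator v) (j + 1) := by
  have hmem := T.self_mem_ancestors j.succ_pos hj
  simp only [spatialHeight_eq_sum_ancestors, ← Finset.add_sum_erase _ _ hmem,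
    indicator_of_notMem (notMem_Iic.mpr j.lt_succ_self), zero_add]
  refine congrArg _ (Finset.sum_congr rfl fun k hk => (indicator_of_mem (mem_Iic.mpr ?_) v).symm)
  obtain ⟨hne, hk⟩ := Finset.mem_erase.mp hk
  exact Nat.lt_succ_iff.mp ((T.le_of_mem_ancestors hk).lt_of_ne hne)

lemma spatialHeight_succ_sub {j : ℕ} (hj : j + 1 < T.verts.card) (v : ℕ → ℝ) :
    T.spatialHeight v (j + 1) - T.spatialHeight v j = v (j + 1) +
      (T.spatialHeight ((Iic j).indicator v) (j + 1) -
        T.spatialHeight ((Iic j).indicator v) j) := by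
  rw [T.spatialHeight_succ hj, T.spatialHeight_indicator_Iic]
  ring

end PlaneTree

lemma measurable_indicator_pi {ι E : Type*} [Zero E] [MeasurableSpace E] (s : Set ι) :
    Measurable fun v : ι → E => s.indicator v := by
  refine measurable_pi_lambda _ fun k => ?_
  by_cases hk : k ∈ s
  · simpa only [indicator_of_mem hk] using measurable_pi_apply k
  · simpa only [indicator_of_notMem hk] using measurable_const


lemma measure_le_one_sub_of_disjoint {X : Type*} [MeasurableSpace X] {ν : Measure X}
    [IsProbabilityMeasure ν] {A B : Set X} (hB : MeasurableSet B) (hAB : Disjoint A B) :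
    ν A ≤ 1 - ν B :=
  ENNReal.le_sub_of_add_le_right (measure_ne_top ν B)
    ((measure_union hAB hB).symm.trans_le prob_le_one)

/-- A window of half-width `t / 4` misses either the bulk `[-q, q]` of `ν` or its tail
`{t ≤ |y|}`, according as it is centred far from or near the origin. -/
lemma measure_abs_add_lt_le (ν : Measure ℝ) [IsProbabilityMeasure ν] {q t : ℝ}
    (hqt : q ≤ t / 2) (z : ℝ) :
    ν {y | |y + z| < t / 4} ≤ 1 - min (ν {y | |y| ≤ q}) (ν {y | t ≤ |y|}) := by
  rcases le_or_gt |z| (t / 4 + q) with hz | hz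
  · refine (measure_le_one_sub_of_disjoint (measurableSet_le measurable_const
      measurable_id.abs) ?_).trans (tsub_le_tsub_left (min_le_right _ _) 1)
    refine disjoint_left.mpr fun y hy hy' => ?_
    have := abs_add_le (y + z) (-z)
    simp only [mem_ofPred_eq, add_neg_cancel_right, abs_neg, id] at hy hy' this
    linarith
  · refine (measure_le_one_sub_of_disjoint (measurableSet_le measurable_id.abs
      measurable_const) ?_).trans (tsub_le_tsub_left (min_le_left _ _) 1)
    refine disjoint_left.mpr fun y hy hy' => ?_
    have := abs_add_le (y + z) (-y)
    simp only [mem_ofPred_eq, add_neg_cancel_comm, abs_neg, id] at hy hy' this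
    linarith

lemma pow_one_sub_min_le_ofReal_exp_neg {x y : ℝ≥0∞} {b : ℝ} {n : ℕ} (hb0 : 0 ≤ b)
    (hb1 : b ≤ 1) (hn : 0 < n) (hbx : ENNReal.ofReal b ≤ x) (hby : ENNReal.ofReal b ≤ n * y) :
    (1 - min x y) ^ n ≤ ENNReal.ofReal (Real.exp (-b)) := by
  have hn1 : (1 : ℝ) ≤ n := by exact_mod_cast hn
  have hbn : ENNReal.ofReal (b / n) ≤ min x y := by
    refine le_min ((ENNReal.ofReal_le_ofReal (div_le_self hb0 hn1)).trans hbx) ?_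
    rw [ENNReal.ofReal_div_of_pos (by positivity), ENNReal.ofReal_natCast]
    exact ENNReal.div_le_of_le_mul' hby
  calc (1 - min x y) ^ n ≤ (1 - ENNReal.ofReal (b / n)) ^ n := by gcongr
    _ = ENNReal.ofReal ((1 - b / n) ^ n) := by
        rw [← ENNReal.ofReal_one, ← ENNReal.ofReal_sub _ (by positivity),
          ENNReal.ofReal_pow (sub_nonneg.mpr (div_le_one_of_le₀ (hb1.trans hn1) n.cast_nonneg))]
    _ ≤ ENNReal.ofReal (Real.exp (-b)) :=
        ENNReal.ofReal_le_ofReal (Real.one_sub_div_pow_le_exp_neg (hb1.trans hn1))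

lemma exists_frequently_ofReal_lt_of_pos_limsup {u : ℕ → ℝ≥0∞} (h : 0 < limsup u atTop)
    {c : ℝ} (hc : 0 < c) : ∃ b : ℝ, 0 < b ∧ b ≤ c ∧ ∃ᶠ n in atTop, ENNReal.ofReal b < u n := by
  obtain ⟨r, hr0, hrL⟩ := exists_between h
  have hr : r ≠ ⊤ := hrL.ne_top
  refine ⟨min r.toReal c, lt_min (ENNReal.toReal_pos hr0.ne' hr) hc, min_le_right _ _,
    frequently_lt_of_lt_limsup (by isBoundedDefault) (lt_of_le_of_lt ?_ hrL)⟩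
  exact (ENNReal.ofReal_le_ofReal (min_le_left _ _)).trans ENNReal.ofReal_toReal_le

lemma exists_lt_measure_abs_le (ν : Measure ℝ) {r : ℝ≥0∞} (hr : r < ν univ) :
    ∃ q : ℝ, r < ν {y | |y| ≤ q} := by
  have hlim := tendsto_measure_iUnion_atTop (μ := ν)
    (fun _ _ h => Metric.closedBall_subset_closedBall (Nat.cast_le.mpr h) :
      Monotone fun q : ℕ => Metric.closedBall (0 : ℝ) q)
  rw [Metric.iUnion_closedBall_nat] at hlim
  obtain ⟨q, hq⟩ := (hlim.eventually (lt_mem_nhds hr)).exists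
  exact ⟨q, by simpa only [Function.comp, Metric.closedBall, Real.dist_eq, sub_zero] using hq⟩

/-- Evaluation is uniformly continuous on the compact set `K ×ˢ univ`. -/
lemma IsCompact.exists_forall_dist_apply_lt {X Y : Type*} [PseudoMetricSpace X]
    [CompactSpace X] [PseudoMetricSpace Y] {K : Set C(X, Y)} (hK : IsCompact K) {ε : ℝ}
    (hε : 0 < ε) : ∃ δ > 0, ∀ g ∈ K, ∀ t₁ t₂, dist t₁ t₂ < δ → dist (g t₁) (g t₂) < ε := by
  have heval : UniformContinuousOn (fun p : C(X, Y) × X => p.1 p.2) (K ×ˢ univ) :=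
    (hK.prod isCompact_univ).uniformContinuousOn_of_continuous continuous_eval.continuousOn
  obtain ⟨δ, hδ, h⟩ := Metric.uniformContinuousOn_iff.mp heval ε hε
  refine ⟨δ, hδ, fun g hg t₁ t₂ ht => h (g, t₁) ⟨hg, trivial⟩ (g, t₂) ⟨hg, trivial⟩ ?_⟩
  simpa [Prod.dist_eq] using ht

/-- For `α > 1` the Laplace transform `exp (l ^ α)` outgrows the bound `exp (-l c)` that it
would obey if the law were carried by `(c, ∞)`. -/
lemma measure_Iic_ne_zero_of_integral_exp_eq {ρ : Measure ℝ} [IsProbabilityMeasure ρ] {α : ℝ}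
    (hα : 1 < α) (hL : ∀ l : ℝ, 0 ≤ l → ∫ x, Real.exp (-l * x) ∂ρ = Real.exp (l ^ α)) (c : ℝ) :
    ρ (Iic c) ≠ 0 := by
  intro hc
  have hae : ∀ᵐ x ∂ρ, c < x := measure_mono_null (fun x (hx : ¬c < x) => not_lt.mp hx) hc
  set l : ℝ := (|c| + 1) ^ (α - 1)⁻¹
  have hl : 0 < l := by positivity
  have hbound : ∀ᵐ x ∂ρ, Real.exp (-l * x) ≤ Real.exp (-l * c) :=
    hae.mono fun x hx => Real.exp_le_exp.mpr (by nlinarith)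
  have hint : Integrable (fun x => Real.exp (-l * x)) ρ :=
    (integrable_const (Real.exp (-l * c))).mono' (by fun_prop)
      (hbound.mono fun x hx => by rwa [Real.norm_of_nonneg (Real.exp_pos _).le])
  have hle : Real.exp (l ^ α) ≤ Real.exp (-l * c) := by
    rw [← hL l hl.le]
    simpa using integral_mono_ae hint (integrable_const _) hbound
  have hpow : l ^ α = (|c| + 1) * l := by
    rw [← Real.rpow_inv_rpow (by positivity : (0 : ℝ) ≤ |c| + 1) (sub_ne_zero.mpr hα.ne'),
      Real.rpow_sub_one hl.ne', div_mul_cancel₀ _ hl.ne']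
  rw [Real.exp_le_exp, hpow] at hle
  nlinarith [neg_abs_le c]

lemma measure_Iic_eq_zero_of_tendsto_integral {ρ : ℕ → Measure ℝ} {ρ₀ : Measure ℝ}
    [IsFiniteMeasure ρ₀]
    (hconv : ∀ f : BoundedContinuousFunction ℝ ℝ,
      Tendsto (fun n => ∫ x, f x ∂ρ n) atTop (𝓝 (∫ x, f x ∂ρ₀)))
    {a : ℝ} (h : ∃ᶠ n in atTop, ∀ᵐ x ∂ρ n, a ≤ x) : ρ₀ (Iic (a - 1)) = 0 := by
  let f : BoundedContinuousFunction ℝ ℝ :=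
    .ofNormedAddCommGroup (fun x => min 1 (max 0 (a - x))) (by fun_prop) 1 fun x => by
      rw [Real.norm_of_nonneg (le_min zero_le_one (le_max_left _ _))]
      exact min_le_left _ _
  have hf : ∀ x, f x = min 1 (max 0 (a - x)) := fun _ => rfl
  have hlim : ∫ x, f x ∂ρ₀ = 0 :=
    tendsto_nhds_unique_of_frequently_eq (hconv f) tendsto_const_nhds
      (h.mono fun n hn => integral_eq_zero_of_ae (hn.mono fun x hx => by simp [hf, hx]))
  have hnull := ae_iff.mp ((integral_eq_zero_iff_of_nonneg
    (fun x => le_min zero_le_one (le_max_left _ _)) (f.integrable ρ₀)).mp hlim)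
  refine measure_mono_null (fun x hx => ?_) hnull
  have : 1 ≤ a - x := by linarith [mem_Iic.mp hx]
  simp [this]

lemma OffspringHyp.tendsto_div_atTop {μ : Measure ℕ} {α : ℝ} {B : ℕ → ℝ}
    (hμ : OffspringHyp μ α B) : Tendsto (fun n : ℕ => (n : ℝ) / B n) atTop atTop := by
  obtain ⟨ρ, hρ, hL, hconv⟩ := hμ.attract
  refine tendsto_atTop.mpr fun M => ?_
  by_contra hM
  refine measure_Iic_ne_zero_of_integral_exp_eq hμ.alpha_mem.1 hL (-M - 1)
    (measure_Iic_eq_zero_of_tendsto_integral hconv ((not_eventually.mp hM).mono fun n hn => ?_))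
  rw [ae_map_iff measurable_from_top.aemeasurable measurableSet_Ici]
  refine ae_of_all _ fun s => ?_
  have hdrop : -((n : ℝ) / B n) ≤ ((s : ℝ) - n) / B n := by
    rw [← neg_div]
    exact div_le_div_of_nonneg_right (by linarith [s.cast_nonneg (α := ℝ)]) (hμ.B_pos n).le
  exact (neg_le_neg (not_le.mp hn).le).trans hdrop


section Probability

variable {Ω : Type*} [MeasurableSpace Ω] {P : Measure Ω}

lemma ProbabilityTheory.IndepFun.measure_mem_prodMk_le [IsFiniteMeasure P] {β γ : Type*}
    [MeasurableSpace β] [MeasurableSpace γ] {X : Ω → β} {Z : Ω → γ} (h : IndepFun X Z P)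
    (hX : Measurable X) (hZ : Measurable Z) {D : Set β} (hD : MeasurableSet D)
    {C : Set (β × γ)} (hC : MeasurableSet C) {c : ℝ≥0∞}
    (hc : ∀ x ∈ D, P.map Z (Prod.mk x ⁻¹' C) ≤ c) :
    P {ω | X ω ∈ D ∧ (X ω, Z ω) ∈ C} ≤ c * P (X ⁻¹' D) := by
  have hmap := (indepFun_iff_map_prod_eq_prod_map_map hX.aemeasurable hZ.aemeasurable).mp h
  have hE : MeasurableSet (D ×ˢ univ ∩ C) := (hD.prod .univ).inter hC
  calc P {ω | X ω ∈ D ∧ (X ω, Z ω) ∈ C}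
      = (P.map X).prod (P.map Z) (D ×ˢ univ ∩ C) := by
        rw [← hmap, Measure.map_apply (hX.prodMk hZ) hE]
        congr 1
        ext ω
        simp [and_comm]
    _ = ∫⁻ x, P.map Z (Prod.mk x ⁻¹' (D ×ˢ univ ∩ C)) ∂P.map X := Measure.prod_apply hE
    _ ≤ ∫⁻ x, D.indicator (fun _ => c) x ∂P.map X := by
        refine lintegral_mono fun x => ?_
        by_cases hx : x ∈ D
        · simpa [indicator_of_mem hx, hx] using hc x hx
        · simp [hx]
    _ = c * P (X ⁻¹' D) := by rw [lintegral_indicator_const hD, Measure.map_apply hX hD]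

lemma ProbabilityTheory.iIndepFun.indepFun_indicator_Iic {Y : ℕ → Ω → ℝ} (h : iIndepFun Y P)
    (hY : ∀ k, Measurable (Y k)) (m : ℕ) :
    IndepFun (fun ω => (Iic m).indicator (Y · ω)) (Y (m + 1)) P := by
  have hsplit := indep_iSup_of_disjoint (fun k => (hY k).comap_le)
    ((iIndepFun_iff_iIndep _ _ _).mp h) (S := Iic m) (T := {m + 1}) (by simp)
  have hpast : Measurable[⨆ i ∈ Iic m, MeasurableSpace.comap (Y i) inferInstance]
      fun ω => (Iic m).indicator (Y · ω) := by
    refine @measurable_pi_lambda _ _ _ (⨆ i ∈ Iic m, MeasurableSpace.comap (Y i) inferInstance)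
      _ _ fun k => ?_
    by_cases hk : k ∈ Iic m
    · simp only [indicator_of_mem hk]
      exact (comap_measurable (Y k)).mono
        (le_iSup₂ (f := fun i (_ : i ∈ Iic m) => MeasurableSpace.comap (Y i) _) k hk) le_rfl
    · simp only [indicator_of_notMem hk]
      exact measurable_const
  rw [IndepFun_iff_Indep]
  refine indep_of_indep_of_le_right (indep_of_indep_of_le_left hsplit hpast.comap_le) ?_
  exact le_iSup₂ (f := fun i (_ : i ∈ ({m + 1} : Set ℕ)) => MeasurableSpace.comap (Y i) _)
      (m + 1) rfl

lemma ProbabilityTheory.iIndepFun.measure_forall_mem_le_pow [IsProbabilityMeasure P]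
    {Y : ℕ → Ω → ℝ} (h : iIndepFun Y P) (hY : ∀ k, Measurable (Y k)) {ν : Measure ℝ}
    (hlaw : ∀ k, P.map (Y k) = ν) {C : ℕ → Set ((ℕ → ℝ) × ℝ)} (hC : ∀ j, MeasurableSet (C j))
    {γ : ℝ≥0∞} (hγ : ∀ j x, ν (Prod.mk x ⁻¹' C j) ≤ γ) (m : ℕ) :
    P {ω | ∀ j < m, ((Iic j).indicator (Y · ω), Y (j + 1) ω) ∈ C j} ≤ γ ^ m := by
  induction m with
  | zero => simp
  | succ m ih =>
    set X : Ω → ℕ → ℝ := fun ω => (Iic m).indicator (Y · ω)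
    set D : Set (ℕ → ℝ) := {v | ∀ j < m, ((Iic j).indicator v, v (j + 1)) ∈ C j}
    have hX : Measurable X := (measurable_indicator_pi _).comp (measurable_pi_lambda _ hY)
    have hD : MeasurableSet D := by
      simp only [D, ofPred_forall]
      exact .iInter fun j => .iInter fun _ =>
        ((measurable_indicator_pi _).prodMk (measurable_pi_apply _)) (hC j)
    have hXD : ∀ ω, X ω ∈ D ↔ ∀ j < m, ((Iic j).indicator (Y · ω), Y (j + 1) ω) ∈ C j := by
      refine fun ω => forall₂_congr fun j hj => ?_
      rw [indicator_indicator, inter_eq_left.mpr (Iic_subset_Iic.mpr hj.le),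
        show X ω (j + 1) = Y (j + 1) ω from indicator_of_mem (mem_Iic.mpr hj) _]
    have hset : {ω | ∀ j < m + 1, ((Iic j).indicator (Y · ω), Y (j + 1) ω) ∈ C j} =
        {ω | X ω ∈ D ∧ (X ω, Y (m + 1) ω) ∈ C m} := by
      ext ω
      simp only [mem_ofPred_eq, Nat.forall_lt_succ_right, hXD]
      rfl
    calc P {ω | ∀ j < m + 1, ((Iic j).indicator (Y · ω), Y (j + 1) ω) ∈ C j}
        ≤ γ * P (X ⁻¹' D) := hset ▸ (h.indepFun_indicator_Iic hY m).measure_mem_prodMk_le hX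
          (hY _) hD (hC m) fun x _ => hlaw (m + 1) ▸ hγ m x
      _ ≤ γ * γ ^ m := by
          gcongr
          exact (measure_mono fun ω hω => (hXD ω).mp hω).trans ih
      _ = γ ^ (m + 1) := (pow_succ' γ m).symm

lemma ProbabilityTheory.IndepFun.measure_mem_le_of_ae [IsProbabilityMeasure P]
    {α β : Type*} [Countable α] [MeasurableSpace α] [MeasurableSingletonClass α]
    [MeasurableSpace β] {T : Ω → α} {V : Ω → β} (h : IndepFun T V P) (hT : Measurable T)
    {A : α → Set β} (hA : ∀ t, MeasurableSet (A t)) {c : ℝ≥0∞}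
    (hc : ∀ᵐ t ∂P.map T, P (V ⁻¹' A t) ≤ c) : P {ω | V ω ∈ A (T ω)} ≤ c := by
  have := Measure.isProbabilityMeasure_map (μ := P) hT.aemeasurable
  have hcover : {ω | V ω ∈ A (T ω)} ⊆ ⋃ t, T ⁻¹' {t} ∩ V ⁻¹' A t := fun ω hω =>
    mem_iUnion.mpr ⟨T ω, rfl, hω⟩
  calc P {ω | V ω ∈ A (T ω)} ≤ ∑' t, P (T ⁻¹' {t} ∩ V ⁻¹' A t) :=
        (measure_mono hcover).trans (measure_iUnion_le _)
    _ = ∑' t, P (V ⁻¹' A t) * P.map T {t} := by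
        refine tsum_congr fun t => ?_
        rw [h.measure_inter_preimage_eq_mul _ _ (measurableSet_singleton t) (hA t),
          Measure.map_apply hT (measurableSet_singleton t), mul_comm]
    _ = ∫⁻ t, P (V ⁻¹' A t) ∂P.map T := (lintegral_countable' _).symm
    _ ≤ ∫⁻ _, c ∂P.map T := lintegral_mono_ae hc
    _ = c := by simp

lemma measure_forall_abs_spatialHeight_sub_lt_le [IsProbabilityMeasure P] {n : ℕ}
    {T : Ω → PlaneTree} (hT : Measurable T) (hcard : ∀ᵐ t ∂P.map T, t.verts.card = n + 1)
    {Y : ℕ → Ω → ℝ} (hY : ∀ k, Measurable (Y k)) (hYindep : iIndepFun Y P) {ν : Measure ℝ}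
    (hlaw : ∀ k, P.map (Y k) = ν) (hindep : IndepFun T (fun ω k => Y k ω) P) {s : ℝ}
    {γ : ℝ≥0∞} (hγ : ∀ z, ν {y | |y + z| < s} ≤ γ) :
    P {ω | ∀ j < n,
      |(T ω).spatialHeight (Y · ω) (j + 1) - (T ω).spatialHeight (Y · ω) j| < s} ≤ γ ^ n := by
  refine hindep.measure_mem_le_of_ae hT
    (A := fun t => {v | ∀ j < n, |t.spatialHeight v (j + 1) - t.spatialHeight v j| < s})
    (fun t => ?_) ?_
  · simp only [ofPred_forall]
    exact .iInter fun j => .iInter fun _ => measurableSet_lt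
      ((t.measurable_spatialHeight _).sub (t.measurable_spatialHeight _)).abs measurable_const
  · filter_upwards [hcard] with t ht
    let C (j : ℕ) : Set ((ℕ → ℝ) × ℝ) :=
      {p | |p.2 + (t.spatialHeight p.1 (j + 1) - t.spatialHeight p.1 j)| < s}
    have hC (j : ℕ) : MeasurableSet (C j) := measurableSet_lt (measurable_snd.add
      (((t.measurable_spatialHeight _).sub (t.measurable_spatialHeight _)).comp
        measurable_fst)).abs measurable_const
    have hset : (fun ω k => Y k ω) ⁻¹'
        {v | ∀ j < n, |t.spatialHeight v (j + 1) - t.spatialHeight v j| < s} =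
        {ω | ∀ j < n, ((Iic j).indicator (Y · ω), Y (j + 1) ω) ∈ C j} := by
      ext ω
      refine forall₂_congr fun j hj => ?_
      rw [t.spatialHeight_succ_sub (by omega)]
      rfl
    rw [hset]
    exact hYindep.measure_forall_mem_le_pow hY hlaw hC (fun j x =>
      hγ (t.spatialHeight x (j + 1) - t.spatialHeight x j)) n

lemma measure_rescaledPath_mem_le [IsProbabilityMeasure P] {n : ℕ} (hn : 0 < n)
    {T : Ω → PlaneTree} (hT : Measurable T) (hcard : ∀ᵐ t ∂P.map T, t.verts.card = n + 1)
    {Y : ℕ → Ω → ℝ} (hY : ∀ k, Measurable (Y k)) (hYindep : iIndepFun Y P) {ν : Measure ℝ}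
    (hlaw : ∀ k, P.map (Y k) = ν) (hindep : IndepFun T (fun ω k => Y k ω) P)
    {K : Set C(Icc (0 : ℝ) 1, ℝ)} {c δ ε : ℝ} (hc : 0 < c) (hδn : 1 / (n : ℝ) < δ)
    (hosc : ∀ g ∈ K, ∀ t₁ t₂, dist t₁ t₂ < δ → dist (g t₁) (g t₂) < ε) {γ : ℝ≥0∞}
    (hγ : ∀ z, ν {y | |y + z| < ε / c} ≤ γ) :
    P {ω | rescaledPath c n (T ω).verts.card ((T ω).spatialHeight fun k => Y k ω) ∈ K} ≤
      γ ^ n := by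
  refine (measure_mono_ae ?_).trans
    (measure_forall_abs_spatialHeight_sub_lt_le hT hcard hY hYindep hlaw hindep hγ)
  filter_upwards [ae_of_ae_map hT.aemeasurable hcard] with ω hω hK j hj
  exact abs_sub_lt_of_dist_rescaledPath_lt hc hn (hω ▸ n.le_succ) hδn (hosc _ hK) hj

lemma one_le_measure_setOf_not_add [IsProbabilityMeasure P] (p : Ω → Prop) :
    1 ≤ P {ω | ¬p ω} + P {ω | p ω} :=
  measure_univ.symm.le.trans
    ((measure_mono fun ω _ => (em (p ω)).symm).trans (measure_union_le _ _))

end Probability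

/-- **Necessity of the tail condition for the non-centred snake** (Theorem 1.2, tightness
part). If `P(|Y| ≥ n/B_n) = o(n^{-1})` fails, then the sequence of laws of the continuous
processes `((B_n/n) H^{sp}_n(nt))_{t ∈ [0,1]}` on `C([0,1], ℝ)` is not tight. -/
theorem spatial_height_not_tight_linear
    (μ : Measure ℕ) (α : ℝ) (B : ℕ → ℝ) (hμ : OffspringHyp μ α B)
    {Ω : Type*} [MeasurableSpace Ω] (P : Measure Ω) [IsProbabilityMeasure P]
    (Tn : ℕ → Ω → PlaneTree) (hTmeas : ∀ n, Measurable (Tn n))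
    (hT : ∀ᶠ n in atTop, IsCondBGW μ n (Measure.map (Tn n) P))
    (Y : ℕ → Ω → ℝ) (hYmeas : ∀ k, Measurable (Y k))
    (hYindep : iIndepFun Y P)
    (ν : Measure ℝ) (hYlaw : ∀ k, Measure.map (Y k) P = ν)
    (hindep : ∀ n, IndepFun (Tn n) (fun ω (k : ℕ) => Y k ω) P)
    (hfail : 0 < Filter.limsup (fun n : ℕ =>
        (n : ℝ≥0∞) * ν {y : ℝ | (n : ℝ) / B n ≤ |y|}) atTop) :
    ¬ ∀ ε : ℝ≥0∞, 0 < ε → ∃ K : Set C(Icc (0 : ℝ) 1, ℝ), IsCompact K ∧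
        ∀ᶠ n : ℕ in atTop,
          P {ω : Ω |
              rescaledPath (B n / n) (n : ℝ) ((Tn n ω).verts.card)
                ((Tn n ω).spatialHeight fun k => Y k ω) ∉ K} ≤ ε := by
  intro htight
  have : IsProbabilityMeasure ν :=
    hYlaw 0 ▸ Measure.isProbabilityMeasure_map (hYmeas 0).aemeasurable
  obtain ⟨b, hb, hb2, hfreq⟩ :=
    exists_frequently_ofReal_lt_of_pos_limsup hfail (c := 2⁻¹) (by norm_num)
  obtain ⟨q, hq⟩ := exists_lt_measure_abs_le ν (r := ENNReal.ofReal b)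
    (by simpa using hb2.trans_lt (by norm_num : (2 : ℝ)⁻¹ < 1))
  have hexp : Real.exp (-b) < 1 := Real.exp_lt_one_iff.mpr (neg_lt_zero.mpr hb)
  obtain ⟨K, hK, hKev⟩ := htight (ENNReal.ofReal ((1 - Real.exp (-b)) / 2))
    (ENNReal.ofReal_pos.mpr (by linarith))
  obtain ⟨δ, hδ, hosc⟩ := hK.exists_forall_dist_apply_lt (ε := 4⁻¹) (by norm_num)
  obtain ⟨n, hbn, hTn, hKn, hqn, hδn, hn⟩ := (hfreq.and_eventually (hT.and (hKev.and
    ((hμ.tendsto_div_atTop.eventually_ge_atTop (2 * q)).and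
    ((tendsto_one_div_atTop_nhds_zero_nat.eventually (gt_mem_nhds hδ)).and
      (eventually_gt_atTop 0)))))).exists
  have hscale : 4⁻¹ / (B n / n) = n / B n / 4 := by
    have := hμ.B_pos n
    field_simp
  have hK := measure_rescaledPath_mem_le hn (hTmeas n) hTn.ae_card_eq hYmeas hYindep hYlaw
    (hindep n) (div_pos (hμ.B_pos n) (by positivity)) hδn hosc
    (fun z => hscale ▸ measure_abs_add_lt_le ν (q := q) (by linarith) z)
  have := (one_le_measure_setOf_not_add _).trans (add_le_add hKn (hK.trans
    (pow_one_sub_min_le_ofReal_exp_neg hb.le (by linarith) hn hq.le hbn.le)))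
  rw [← ENNReal.ofReal_add (by linarith) (Real.exp_pos _).le, ENNReal.one_le_ofReal] at this
  linarith
end
end
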